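/- arXiv:1407.6831 — 4 statements merged into one kernel-verified Lean document; each statement's English description precedes it below -/
import Mathlib

section
/- Let 0 < p < 1, q = 1 - p, and 0 < w < 1. Set α = wp, β = wq, γ = 1 - w. Let N* be a geometric random variable with P(N* = n) = w^{n-1}(1-w) for n ≥ 1, independent of an i.i.d. Bernoulli(p) sequence ξ₁, ξ₂, .... Let R_ℓ(n) denote the number of maximal runs of 1's of length exactly ℓ among ξ₁,...,ξ_n, and set R* = (R₁(N*-1), R₂(N*-1), ...). Then for any sequence (z_j) of complex numbers with |z_j| ≤ 1, E[∏_{j≥1} z_j^{R*_j}] = γ(1 + ∑_{j≥1} α^j z_j) / (1 - β - β ∑_{j≥1} α^j z_j). -/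
/-!
Condition on the position `j` of the first `0` among the tosses: with probability `pʲ(1-p)` they
start with `j` ones and a zero, the run of length `j` contributes `z_j`, and the remaining `n-1-j`
tosses start afresh. With `z₀ = 1` this renewal recursion for `F(n) = E ∏ z_ℓ ^ R_ℓ(n)` turns into
`B = A + w(1-p)·A·B` for the generating functions `A = ∑ (wp)ʲ z_j` and `B = ∑ wⁿ F(n)`, and
`‖w(1-p)·A‖ ≤ w(1-p)/(1-wp) < 1` lets one solve for `B`.
-/

open scoped Classical
open Finset Filter

noncomputable section

/-- Weight (probability) of a Boolean string of length `n` under i.i.d. Bernoulli(p). -/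
def wt (p : ℝ) {n : ℕ} (x : Fin n → Bool) : ℝ :=
  ∏ i, (if x i then p else 1 - p)

/-- Extend a finite string by `false`. -/
def pad {n : ℕ} (x : Fin n → Bool) : ℕ → Bool :=
  fun i => if h : i < n then x ⟨i, h⟩ else false

/-- A maximal run of 1's of length exactly `ℓ` starts at position `i` (0-indexed)
within the first `n` positions. -/
def IsRunAt (x : ℕ → Bool) (n i ℓ : ℕ) : Prop :=
  1 ≤ ℓ ∧ i + ℓ ≤ n ∧ (∀ k < ℓ, x (i + k) = true) ∧
    (i = 0 ∨ x (i - 1) = false) ∧ (i + ℓ = n ∨ x (i + ℓ) = false)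

/-- `R_ℓ(n)`: the number of maximal runs of 1's of length exactly `ℓ` in the first `n` tosses. -/
def runCount (x : ℕ → Bool) (n ℓ : ℕ) : ℕ :=
  ((Finset.range n).filter (fun i => IsRunAt x n i ℓ)).card

/-- `G_ℓ(n)`: the number of maximal runs of 1's of length at least `ℓ` in the first `n` tosses. -/
def excCount (x : ℕ → Bool) (n ℓ : ℕ) : ℕ :=
  ∑ k ∈ Finset.Icc ℓ n, runCount x n k

/-- `L(n)`: the length of the longest run of 1's in the first `n` tosses. -/
def longestRun (x : ℕ → Bool) (n : ℕ) : ℕ :=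
  (Finset.range (n + 1)).sup
    (fun ℓ => if ∃ i, i + ℓ ≤ n ∧ ∀ k < ℓ, x (i + k) = true then ℓ else 0)

/-- Expectation of a (real) functional of `n` i.i.d. Bernoulli(p) tosses. -/
def Ex (p : ℝ) (n : ℕ) (f : (ℕ → Bool) → ℝ) : ℝ :=
  ∑ x : Fin n → Bool, wt p x * f (pad x)

/-- Expectation of a complex functional of `n` i.i.d. Bernoulli(p) tosses. -/
def ExC (p : ℝ) (n : ℕ) (f : (ℕ → Bool) → ℂ) : ℂ :=
  ∑ x : Fin n → Bool, (wt p x : ℂ) * f (pad x)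

/-- Probability of an event depending on the first `n` i.i.d. Bernoulli(p) tosses. -/
def Pr (p : ℝ) (n : ℕ) (A : Set (ℕ → Bool)) : ℝ :=
  ∑ x : Fin n → Bool, if pad x ∈ A then wt p x else 0

/-- Binomial coefficient with integer upper argument, vanishing for negative upper argument. -/
def C (a : ℤ) (b : ℕ) : ℝ :=
  if a < 0 then 0 else (a.toNat).choose b

def seqCons (b : Bool) (x : ℕ → Bool) : ℕ → Bool
  | 0 => b
  | i + 1 => x i

@[simp] lemma seqCons_zero (b : Bool) (x : ℕ → Bool) : seqCons b x 0 = b := rfl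

@[simp] lemma seqCons_succ (b : Bool) (x : ℕ → Bool) (i : ℕ) : seqCons b x (i + 1) = x i := rfl

lemma iterate_seqCons_apply_of_lt {b : Bool} {x : ℕ → Bool} {i j : ℕ} (h : i < j) :
    (seqCons b)^[j] x i = b := by
  induction j generalizing i with
  | zero => omega
  | succ j ih =>
    rw [Function.iterate_succ_apply']
    rcases i with _ | i
    · rfl
    · exact ih (by omega)

lemma iterate_seqCons_apply_add (b : Bool) (x : ℕ → Bool) (j i : ℕ) :
    (seqCons b)^[j] x (j + i) = x i := by
  induction j with
  | zero => simp
  | succ j ih => rw [Function.iterate_succ_apply', Nat.add_right_comm, seqCons_succ, ih]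

lemma runCount_eq_zero_of_lt {x : ℕ → Bool} {n ℓ : ℕ} (h : n < ℓ) : runCount x n ℓ = 0 := by
  rw [runCount, Finset.card_eq_zero, Finset.filter_eq_empty_iff]
  rintro i - ⟨-, hle, -⟩
  omega

lemma isRunAt_iff_of_forall_true {x : ℕ → Bool} {n i ℓ : ℕ} (hℓ : 1 ≤ ℓ)
    (ht : ∀ i < n, x i = true) : IsRunAt x n i ℓ ↔ i = 0 ∧ ℓ = n := by
  constructor
  · rintro ⟨-, hle, -, hstart, hend⟩
    have hi : i = 0 := hstart.resolve_right fun h => by simp [ht (i - 1) (by omega)] at h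
    refine ⟨hi, hend.elim (by omega) fun h => ?_⟩
    by_contra hne
    simp [ht (i + ℓ) (by omega)] at h
  · rintro ⟨rfl, rfl⟩
    exact ⟨hℓ, by omega, fun k hk => by simpa using ht k hk, Or.inl rfl, Or.inl (zero_add ℓ)⟩

lemma runCount_eq_of_forall_true {x : ℕ → Bool} {n ℓ : ℕ} (hℓ : 1 ≤ ℓ)
    (ht : ∀ i < n, x i = true) : runCount x n ℓ = if ℓ = n then 1 else 0 := by
  simp only [runCount, isRunAt_iff_of_forall_true hℓ ht]
  split_ifs with h
  · subst h
    rw [Finset.card_eq_one]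
    refine ⟨0, Finset.ext fun i => ?_⟩
    simp only [Finset.mem_filter, Finset.mem_range, Finset.mem_singleton, and_true]
    omega
  · simp [h]

lemma isRunAt_add_iff_of_le {x : ℕ → Bool} {d n i ℓ : ℕ} (hd : x d = false) (hi : i ≤ d) :
    IsRunAt x (d + 1 + n) i ℓ ↔ IsRunAt x d i ℓ := by
  constructor
  · rintro ⟨hℓ, -, hrun, hstart, hend⟩
    have hle : i + ℓ ≤ d := by
      by_contra! h
      have := hrun (d - i) (by omega)
      rw [Nat.add_sub_cancel' hi, hd] at this
      exact Bool.false_ne_true this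
    exact ⟨hℓ, hle, hrun, hstart, Or.inr (hend.resolve_left (by omega))⟩
  · rintro ⟨hℓ, hle, hrun, hstart, hend⟩
    exact ⟨hℓ, by omega, hrun, hstart, Or.inr (hend.elim (fun h => h ▸ hd) id)⟩

lemma isRunAt_add_iff_tail {x : ℕ → Bool} {d n i ℓ : ℕ} (hd : x d = false) :
    IsRunAt x (d + 1 + n) (d + 1 + i) ℓ ↔ IsRunAt (fun t => x (d + 1 + t)) n i ℓ := by
  rcases i with _ | i
  · simp [IsRunAt, hd, add_assoc]
  · simp [IsRunAt, show d + (1 + (i + 1)) - 1 = d + (1 + i) by omega, add_assoc]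

lemma runCount_add_of_false {x : ℕ → Bool} {d : ℕ} (hd : x d = false) (n ℓ : ℕ) :
    runCount x (d + 1 + n) ℓ = runCount x d ℓ + runCount (fun t => x (d + 1 + t)) n ℓ := by
  simp only [runCount, Finset.card_filter]
  rw [Finset.sum_range_add, Finset.sum_range_succ]
  have hlast : ¬ IsRunAt x d d ℓ := fun ⟨hℓ, hle, _⟩ => by omega
  simp only [isRunAt_add_iff_of_le hd le_rfl, if_neg hlast, isRunAt_add_iff_tail hd, add_zero]
  congr 1
  exact Finset.sum_congr rfl fun i hi => by
    rw [isRunAt_add_iff_of_le hd (Finset.mem_range.1 hi).le]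

def runProd (z : ℕ → ℂ) (x : ℕ → Bool) (n : ℕ) : ℂ :=
  ∏ ℓ ∈ Finset.range n, z (ℓ + 1) ^ runCount x n (ℓ + 1)

def runWeight (z : ℕ → ℂ) (ℓ : ℕ) : ℂ :=
  if ℓ = 0 then 1 else z ℓ

lemma prod_range_runCount_eq_runProd (z : ℕ → ℂ) (x : ℕ → Bool) {n N : ℕ} (h : n ≤ N) :
    ∏ ℓ ∈ Finset.range N, z (ℓ + 1) ^ runCount x n (ℓ + 1) = runProd z x n := by
  refine (Finset.prod_subset (Finset.range_subset_range.2 h) fun ℓ _ hℓ => ?_).symm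
  rw [runCount_eq_zero_of_lt (by simp at hℓ; omega), pow_zero]

lemma runProd_of_forall_true (z : ℕ → ℂ) {x : ℕ → Bool} {n : ℕ} (ht : ∀ i < n, x i = true) :
    runProd z x n = runWeight z n := by
  rcases n with _ | n
  · simp [runProd, runWeight]
  · rw [runProd, Finset.prod_range_succ, Finset.prod_eq_one]
    · simp [runCount_eq_of_forall_true le_add_self ht, runWeight]
    · intro ℓ hℓ
      rw [runCount_eq_of_forall_true le_add_self ht, if_neg (by simp at hℓ; omega), pow_zero]

lemma runProd_add_of_false (z : ℕ → ℂ) {x : ℕ → Bool} {d : ℕ} (hd : x d = false) (n : ℕ) :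
    runProd z x (d + 1 + n) = runProd z x d * runProd z (fun t => x (d + 1 + t)) n := by
  rw [runProd, ← prod_range_runCount_eq_runProd z x (by omega : d ≤ d + 1 + n),
    ← prod_range_runCount_eq_runProd z _ (by omega : n ≤ d + 1 + n), ← Finset.prod_mul_distrib]
  simp only [runCount_add_of_false hd, pow_add]

lemma runProd_iterate_seqCons (z : ℕ → ℂ) (y : ℕ → Bool) (j n : ℕ) :
    runProd z ((seqCons true)^[j] (seqCons false y)) (j + 1 + n) =
      runWeight z j * runProd z y n := by
  have hj : (seqCons true)^[j] (seqCons false y) j = false := by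
    simpa using iterate_seqCons_apply_add true (seqCons false y) j 0
  rw [runProd_add_of_false z hj,
    runProd_of_forall_true z fun i hi => iterate_seqCons_apply_of_lt hi]
  congr 2
  funext t
  rw [add_assoc, iterate_seqCons_apply_add, add_comm, seqCons_succ]

lemma norm_runProd_le {z : ℕ → ℂ} (hz : ∀ j, ‖z j‖ ≤ 1) (x : ℕ → Bool) (n : ℕ) :
    ‖runProd z x n‖ ≤ 1 := by
  rw [runProd, norm_prod]
  exact Finset.prod_le_one (fun _ _ => norm_nonneg _) fun ℓ _ => by
    rw [norm_pow]; exact pow_le_one₀ (norm_nonneg _) (hz _)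

lemma norm_runWeight_le {z : ℕ → ℂ} (hz : ∀ j, ‖z j‖ ≤ 1) (ℓ : ℕ) : ‖runWeight z ℓ‖ ≤ 1 := by
  unfold runWeight
  split_ifs
  · simp
  · exact hz ℓ

lemma pad_cons {n : ℕ} (b : Bool) (y : Fin n → Bool) :
    pad (Fin.cons b y : Fin (n + 1) → Bool) = seqCons b (pad y) := by
  funext i
  rcases i with _ | i
  · simp [pad]
  · by_cases h : i < n
    · simp only [pad, seqCons_succ, dif_pos h, dif_pos (Nat.succ_lt_succ h)]
      rfl
    · simp [pad, h]

lemma wt_cons (p : ℝ) {n : ℕ} (b : Bool) (y : Fin n → Bool) :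
    wt p (Fin.cons b y : Fin (n + 1) → Bool) = (if b then p else 1 - p) * wt p y := by
  simp [wt, Fin.prod_univ_succ]

lemma ExC_zero (p : ℝ) (f : (ℕ → Bool) → ℂ) : ExC p 0 f = f fun _ => false := by
  simp only [ExC, Finset.univ_unique, Finset.sum_singleton, wt, Finset.univ_eq_empty,
    Finset.prod_empty, Complex.ofReal_one, one_mul]
  congr 1

lemma ExC_succ (p : ℝ) (n : ℕ) (f : (ℕ → Bool) → ℂ) :
    ExC p (n + 1) f = p * ExC p n (f ∘ seqCons true) + (1 - p) * ExC p n (f ∘ seqCons false) := by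
  rw [ExC, ← (Fin.consEquiv fun _ => Bool).sum_comp, Fintype.sum_prod_type, Fintype.sum_bool,
    ExC, ExC, Finset.mul_sum, Finset.mul_sum]
  simp [Fin.consEquiv, wt_cons, pad_cons, mul_assoc]

lemma ExC_const_mul (p : ℝ) (n : ℕ) (c : ℂ) (f : (ℕ → Bool) → ℂ) :
    ExC p n (fun x => c * f x) = c * ExC p n f := by
  simp only [ExC, Finset.mul_sum]
  exact Finset.sum_congr rfl fun _ _ => mul_left_comm _ _ _

lemma norm_ExC_le {p : ℝ} (hp0 : 0 ≤ p) (hp1 : p ≤ 1) {M : ℝ} :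
    ∀ (n : ℕ) {f : (ℕ → Bool) → ℂ}, (∀ x, ‖f x‖ ≤ M) → ‖ExC p n f‖ ≤ M
  | 0, f, hf => by rw [ExC_zero]; exact hf _
  | n + 1, f, hf => by
    rw [ExC_succ]
    have htrue : ‖ExC p n (f ∘ seqCons true)‖ ≤ M := norm_ExC_le hp0 hp1 n fun _ => hf _
    have hfalse : ‖ExC p n (f ∘ seqCons false)‖ ≤ M := norm_ExC_le hp0 hp1 n fun _ => hf _
    calc _ ≤ p * ‖ExC p n (f ∘ seqCons true)‖ + (1 - p) * ‖ExC p n (f ∘ seqCons false)‖ := by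
          refine (norm_add_le _ _).trans_eq ?_
          rw [norm_mul, norm_mul, Complex.norm_real, ← Complex.ofReal_one, ← Complex.ofReal_sub,
            Complex.norm_real, Real.norm_of_nonneg hp0, Real.norm_of_nonneg (by linarith)]
      _ ≤ p * M + (1 - p) * M := by gcongr
      _ = M := by ring

-- `(seqCons true)^[j] (seqCons false y)` is the sequence `1 … 1 0 y` with `j` leading ones.
lemma ExC_eq_sum_first_false (p : ℝ) (n : ℕ) (f : (ℕ → Bool) → ℂ) :
    ExC p n f = p ^ n * f ((seqCons true)^[n] fun _ => false) +
      (1 - p) * ∑ j ∈ Finset.range n,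
        p ^ j * ExC p (n - 1 - j) fun y => f ((seqCons true)^[j] (seqCons false y)) := by
  induction n generalizing f with
  | zero => simp [ExC_zero]
  | succ n ih =>
    rw [ExC_succ, ih, Finset.sum_range_succ']
    simp only [Function.comp_def, ← Function.iterate_succ_apply' (seqCons true),
      Nat.succ_eq_add_one, Nat.add_sub_cancel, Nat.sub_zero, Function.iterate_zero_apply,
      show ∀ j, n - 1 - j = n - (j + 1) by omega, pow_succ', mul_assoc, ← Finset.mul_sum]
    ring

lemma ExC_runProd_eq (p : ℝ) (z : ℕ → ℂ) (n : ℕ) :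
    ExC p n (runProd z · n) = p ^ n * runWeight z n +
      (1 - p) * ∑ j ∈ Finset.range n,
        p ^ j * runWeight z j * ExC p (n - 1 - j) (runProd z · (n - 1 - j)) := by
  rw [ExC_eq_sum_first_false, runProd_of_forall_true z fun i hi => iterate_seqCons_apply_of_lt hi]
  congr 2
  refine Finset.sum_congr rfl fun j hj => ?_
  obtain ⟨m, rfl⟩ : ∃ m, n = j + 1 + m := ⟨n - 1 - j, by simp at hj; omega⟩
  simp only [runProd_iterate_seqCons, ExC_const_mul, show j + 1 + m - 1 - j = m by omega, mul_assoc]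

lemma tsum_eq_add_mul_of_renewal {R : Type*} [NormedRing R] [CompleteSpace R] {a b : ℕ → R}
    {c : R} (ha : Summable fun n => ‖a n‖) (hb : Summable fun n => ‖b n‖)
    (hrec : ∀ n, b n = a n + c * ∑ j ∈ Finset.range n, a j * b (n - 1 - j)) :
    ∑' n, b n = ∑' n, a n + c * ((∑' n, a n) * ∑' n, b n) := by
  have hconv : Summable fun n => c * ∑ j ∈ Finset.range n, a j * b (n - 1 - j) :=
    (hb.of_norm.sub ha.of_norm).congr fun n => by rw [hrec n, add_sub_cancel_left]
  calc ∑' n, b n = ∑' n, (a n + c * ∑ j ∈ Finset.range n, a j * b (n - 1 - j)) := tsum_congr hrec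
    _ = ∑' n, a n + ∑' n, c * ∑ k ∈ Finset.range (n + 1), a k * b (n - k) := by
      rw [ha.of_norm.tsum_add hconv, hconv.tsum_eq_zero_add]
      simp
    _ = ∑' n, a n + c * ((∑' n, a n) * ∑' n, b n) := by
      rw [tsum_mul_tsum_eq_tsum_sum_range_of_summable_norm ha hb,
        (summable_norm_sum_mul_range_of_summable_norm ha hb).of_norm.tsum_mul_left]

lemma pow_mul_ExC_runProd_eq (p w : ℝ) (z : ℕ → ℂ) (n : ℕ) :
    (w : ℂ) ^ n * ExC p n (runProd z · n) = ((w * p : ℝ) : ℂ) ^ n * runWeight z n +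
      ((w * (1 - p) : ℝ) : ℂ) * ∑ j ∈ Finset.range n, ((w * p : ℝ) : ℂ) ^ j * runWeight z j *
        ((w : ℂ) ^ (n - 1 - j) * ExC p (n - 1 - j) (runProd z · (n - 1 - j))) := by
  rw [ExC_runProd_eq, mul_add, Finset.mul_sum, Finset.mul_sum, Finset.mul_sum]
  push_cast
  congr 1
  · ring
  · refine Finset.sum_congr rfl fun j hj => ?_
    obtain ⟨m, rfl⟩ : ∃ m, n = j + 1 + m := ⟨n - 1 - j, by simp at hj; omega⟩
    rw [show j + 1 + m - 1 - j = m by omega]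
    ring

lemma summable_norm_pow_mul {r : ℂ} (hr : ‖r‖ < 1) {u : ℕ → ℂ} (hu : ∀ n, ‖u n‖ ≤ 1) :
    Summable fun n => ‖r ^ n * u n‖ :=
  (summable_geometric_of_lt_one (norm_nonneg r) hr).of_nonneg_of_le (fun _ => norm_nonneg _)
    fun n => by
      rw [norm_mul, norm_pow]
      exact mul_le_of_le_one_right (by positivity) (hu n)

lemma tsum_pow_mul_ExC_runProd {p w : ℝ} (hp0 : 0 ≤ p) (hp1 : p ≤ 1) (hw0 : 0 ≤ w) (hw1 : w < 1)
    {z : ℕ → ℂ} (hz : ∀ j, ‖z j‖ ≤ 1) :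
    ∑' n, (w : ℂ) ^ n * ExC p n (runProd z · n) =
      (∑' j, ((w * p : ℝ) : ℂ) ^ j * runWeight z j) /
        (1 - ((w * (1 - p) : ℝ) : ℂ) * ∑' j, ((w * p : ℝ) : ℂ) ^ j * runWeight z j) := by
  set A := ∑' j, ((w * p : ℝ) : ℂ) ^ j * runWeight z j
  have hwp : ‖((w * p : ℝ) : ℂ)‖ = w * p := by
    rw [Complex.norm_real, Real.norm_of_nonneg (by positivity)]
  have hwp1 : w * p < 1 := by nlinarith
  have ha := summable_norm_pow_mul (hwp ▸ hwp1) (norm_runWeight_le hz)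
  have hb : Summable fun n => ‖(w : ℂ) ^ n * ExC p n (runProd z · n)‖ :=
    summable_norm_pow_mul (by simpa [abs_of_nonneg hw0] using hw1)
      fun n => norm_ExC_le hp0 hp1 n fun x => norm_runProd_le hz x n
  have hrec := tsum_eq_add_mul_of_renewal ha hb (pow_mul_ExC_runProd_eq p w z)
  have hA : ‖A‖ ≤ (1 - w * p)⁻¹ := by
    refine tsum_of_norm_bounded (hasSum_geometric_of_lt_one (by positivity) hwp1) fun j => ?_
    rw [norm_mul, norm_pow, hwp]
    exact mul_le_of_le_one_right (by positivity) (norm_runWeight_le hz j)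
  have hcA : ‖((w * (1 - p) : ℝ) : ℂ) * A‖ < 1 := by
    rw [norm_mul, Complex.norm_real, Real.norm_of_nonneg (by nlinarith)]
    calc w * (1 - p) * ‖A‖ ≤ w * (1 - p) * (1 - w * p)⁻¹ := by gcongr
      _ < 1 := by rw [← div_eq_mul_inv, div_lt_one (by linarith)]; linarith
  have hden : 1 - ((w * (1 - p) : ℝ) : ℂ) * A ≠ 0 := fun h => by
    rw [sub_eq_zero] at h
    rw [← h, norm_one] at hcA
    exact lt_irrefl 1 hcA
  rw [eq_div_iff hden]
  linear_combination hrec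

lemma tsum_pow_mul_runWeight {z : ℕ → ℂ} {r : ℂ} (h : Summable fun j => r ^ j * runWeight z j) :
    ∑' j, r ^ j * runWeight z j = 1 + ∑' j, r ^ (j + 1) * z (j + 1) := by
  rw [h.tsum_eq_zero_add]
  simp [runWeight]

/-- portmanteau generating function at geometric time. -/
theorem stmt0 (p w : ℝ) (hp : 0 < p) (hp1 : p < 1) (hw : 0 < w) (hw1 : w < 1)
    (z : ℕ → ℂ) (hz : ∀ j, ‖z j‖ ≤ 1) :
    ((1 - w : ℝ) : ℂ) * ∑' n : ℕ, (w : ℂ) ^ n *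
        ExC p n (fun x => ∏ j ∈ Finset.range n, z (j + 1) ^ runCount x n (j + 1)) =
      ((1 - w : ℝ) : ℂ) * (1 + ∑' j : ℕ, ((w * p : ℝ) : ℂ) ^ (j + 1) * z (j + 1)) /
        (1 - ((w * (1 - p) : ℝ) : ℂ) -
          ((w * (1 - p) : ℝ) : ℂ) * ∑' j : ℕ, ((w * p : ℝ) : ℂ) ^ (j + 1) * z (j + 1)) := by
  have hwp : ‖((w * p : ℝ) : ℂ)‖ < 1 := by
    rw [Complex.norm_real, Real.norm_of_nonneg (by positivity)]
    nlinarith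
  have hA := tsum_pow_mul_runWeight (summable_norm_pow_mul hwp (norm_runWeight_le hz)).of_norm
  calc _ = ((1 - w : ℝ) : ℂ) * ∑' n, (w : ℂ) ^ n * ExC p n (runProd z · n) := rfl
    _ = _ := by
      rw [tsum_pow_mul_ExC_runProd hp.le hp1.le hw.le hw1 hz, hA]
      ring
end
end

section
/- With the notation above (α = wp, β = wq, γ = 1-w, R* the run-count vector at an independent geometric time N*-1), for any ℓ ≥ 1 the random variable R*_ℓ has distribution Geo(α_ℓ, β_ℓ), meaning P(R*_ℓ = 0) = α_ℓ and P(R*_ℓ = n) = (1-α_ℓ)(1-β_ℓ)β_ℓ^{n-1} for n ≥ 1, where α_ℓ = γ(1+σ_ℓ)/(1-β-βσ_ℓ), β_ℓ = βα^ℓ/(1-β-βσ_ℓ), and σ_ℓ = ∑_{j≥1, j≠ℓ} α^j. -/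
open scoped Classical
open Finset Filter

noncomputable section

/-!
With `α = wp`, `β = wq`, `γ = 1 - w`, put `S m = ∑ₙ wⁿ P(R_ℓ(n) = m)`, so that
`P(R*_ℓ = m) = γ S m`. Split a string of length `n` at its first `0`: either it is `1ⁿ`, or it is
`1ʲ 0 y` with `y` a fresh string of length `n - j - 1`, and the block `1ʲ 0` adds one run of
length `ℓ` exactly when `j = ℓ`. Weighted by `wⁿ`, this convolution becomes the linear recursion
`S m = T m + β A S m + β α^ℓ S (m - 1)` (last term absent for `m = 0`), where
`A = ∑_{k ≠ ℓ} αᵏ = 1 + σ_ℓ`, `T 0 = A`, `T 1 = α^ℓ` and `T m = 0` otherwise. Hence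
`S 0 = A / (1 - β A)`, and from `m = 1` on `S` is geometric with ratio `β α^ℓ / (1 - β A) = β_ℓ`.
-/

def consSeq (b : Bool) (x : ℕ → Bool) : ℕ → Bool
  | 0 => b
  | i + 1 => x i

def onesThenFalse : ℕ → (ℕ → Bool) → ℕ → Bool
  | 0, y => consSeq false y
  | j + 1, y => consSeq true (onesThenFalse j y)

lemma onesThenFalse_of_lt {j i : ℕ} (y : ℕ → Bool) (h : i < j) : onesThenFalse j y i = true := by
  induction j generalizing i with
  | zero => omega
  | succ j ih => cases i with
    | zero => rfl
    | succ i => exact ih (by omega)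

lemma onesThenFalse_self (j : ℕ) (y : ℕ → Bool) : onesThenFalse j y j = false := by
  induction j with
  | zero => rfl
  | succ j ih => exact ih

lemma onesThenFalse_add (j : ℕ) (y : ℕ → Bool) (t : ℕ) : onesThenFalse j y (j + 1 + t) = y t := by
  induction j with
  | zero => simp [onesThenFalse, consSeq, add_comm]
  | succ j ih => rw [show j + 1 + 1 + t = (j + 1 + t) + 1 by omega]; exact ih

lemma preimage_onesThenFalse_succ (j : ℕ) (A : Set (ℕ → Bool)) :
    onesThenFalse (j + 1) ⁻¹' A = onesThenFalse j ⁻¹' (consSeq true ⁻¹' A) :=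
  rfl

lemma pad_fin_cons {n : ℕ} (b : Bool) (x : Fin n → Bool) :
    pad (Fin.cons b x : Fin (n + 1) → Bool) = consSeq b (pad x) := by
  funext i
  cases i with
  | zero => rfl
  | succ i =>
    by_cases h : i < n
    · simp only [pad, consSeq, dif_pos h, dif_pos (Nat.succ_lt_succ h)]
      exact Fin.cons_succ (α := fun _ => Bool) b x ⟨i, h⟩
    · simp only [pad, consSeq, dif_neg h, dif_neg (mt Nat.lt_of_succ_lt_succ h)]

lemma wt_fin_cons (p : ℝ) {n : ℕ} (b : Bool) (x : Fin n → Bool) :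
    wt p (Fin.cons b x : Fin (n + 1) → Bool) = (if b then p else 1 - p) * wt p x := by
  simp [wt, Fin.prod_univ_succ]

lemma Pr_succ (p : ℝ) (n : ℕ) (A : Set (ℕ → Bool)) :
    Pr p (n + 1) A = p * Pr p n (consSeq true ⁻¹' A) + (1 - p) * Pr p n (consSeq false ⁻¹' A) := by
  rw [Pr, ← (Fin.consEquiv fun _ => Bool).sum_comp, Fintype.sum_prod_type, Fintype.sum_bool]
  simp only [Fin.consEquiv, Equiv.coe_fn_mk, pad_fin_cons, wt_fin_cons, Pr, mul_sum,
    Set.mem_preimage, ↓reduceIte, Bool.false_eq_true, mul_ite, mul_zero]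

def allOnes (n : ℕ) : ℕ → Bool := fun i => decide (i < n)

lemma consSeq_true_allOnes (n : ℕ) : consSeq true (allOnes n) = allOnes (n + 1) := by
  funext i
  cases i <;> simp [consSeq, allOnes]

lemma Pr_zero (p : ℝ) (A : Set (ℕ → Bool)) : Pr p 0 A = if allOnes 0 ∈ A then 1 else 0 := by
  have h (x : Fin 0 → Bool) : pad x = allOnes 0 := by funext i; simp [pad, allOnes]
  rw [Pr, Fintype.sum_unique, h, wt, univ_eq_empty, prod_empty]

lemma Pr_mem_Icc {p : ℝ} (hp0 : 0 ≤ p) (hp1 : p ≤ 1) (n : ℕ) (A : Set (ℕ → Bool)) :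
    Pr p n A ∈ Set.Icc 0 1 := by
  induction n generalizing A with
  | zero => rw [Pr_zero]; split_ifs <;> simp
  | succ n ih =>
    obtain ⟨h1, h1'⟩ := ih (consSeq true ⁻¹' A)
    obtain ⟨h2, h2'⟩ := ih (consSeq false ⁻¹' A)
    rw [Pr_succ]
    constructor <;> nlinarith

lemma Pr_eq_add_sum_onesThenFalse (p : ℝ) (n : ℕ) (A : Set (ℕ → Bool)) :
    Pr p n A = (if allOnes n ∈ A then p ^ n else 0) +
      ∑ j ∈ range n, p ^ j * (1 - p) * Pr p (n - (j + 1)) (onesThenFalse j ⁻¹' A) := by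
  induction n generalizing A with
  | zero => simp [Pr_zero]
  | succ n ih =>
    have hsum : p * ∑ j ∈ range n, p ^ j * (1 - p) *
          Pr p (n - (j + 1)) (onesThenFalse j ⁻¹' (consSeq true ⁻¹' A)) =
        ∑ j ∈ range n, p ^ (j + 1) * (1 - p) *
          Pr p (n + 1 - (j + 1 + 1)) (onesThenFalse (j + 1) ⁻¹' A) := by
      rw [mul_sum]
      refine sum_congr rfl fun j _ => ?_
      rw [Nat.add_sub_add_right, pow_succ, preimage_onesThenFalse_succ]
      ring
    have h0 : onesThenFalse 0 ⁻¹' A = consSeq false ⁻¹' A := rfl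
    rw [Pr_succ, ih, sum_range_succ', Set.mem_preimage, consSeq_true_allOnes, mul_add, hsum,
      zero_add, pow_zero, one_mul, Nat.add_sub_cancel, h0, pow_succ]
    split_ifs <;> ring

lemma card_filter_range_eq_zero_and (m : ℕ) (P : Prop) [Decidable P] (h : P → 0 < m) :
    #((range m).filter (fun i => i = 0 ∧ P)) = if P then 1 else 0 := by
  split_ifs with hP
  · simp [hP, h hP]
  · simp [hP]

lemma isRunAt_allOnes_iff {n i ℓ : ℕ} (hℓ : 1 ≤ ℓ) :
    IsRunAt (allOnes n) n i ℓ ↔ i = 0 ∧ ℓ = n := by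
  simp only [IsRunAt, allOnes, decide_eq_true_eq, decide_eq_false_iff_not]
  constructor
  · rintro ⟨-, hend, -, hleft, hright⟩
    omega
  · rintro ⟨rfl, rfl⟩
    exact ⟨hℓ, by omega, fun k hk => by omega, Or.inl rfl, Or.inl (by omega)⟩

lemma runCount_allOnes {n ℓ : ℕ} (hℓ : 1 ≤ ℓ) :
    runCount (allOnes n) n ℓ = if n = ℓ then 1 else 0 := by
  rw [runCount, filter_congr fun i _ => isRunAt_allOnes_iff hℓ,
    card_filter_range_eq_zero_and _ _ (by omega)]
  simp only [eq_comm]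

lemma isRunAt_onesThenFalse_iff_of_le {j n i ℓ : ℕ} (y : ℕ → Bool) (hℓ : 1 ≤ ℓ) (hj : j < n)
    (hi : i ≤ j) : IsRunAt (onesThenFalse j y) n i ℓ ↔ i = 0 ∧ ℓ = j := by
  have hval : ∀ k ≤ j, onesThenFalse j y k = decide (k < j) := fun k hk => by
    rcases hk.lt_or_eq with hk | rfl
    · simp [onesThenFalse_of_lt y hk, hk]
    · simp [onesThenFalse_self]
  constructor
  · rintro ⟨-, -, hones, hleft, hright⟩
    have hend : i + ℓ ≤ j := by
      by_contra! h
      have := hones (j - i) (by omega)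
      rw [hval _ (by omega), decide_eq_true_iff] at this
      omega
    have h1 : i = 0 ∨ ¬ i - 1 < j :=
      hleft.imp_right fun h => by rwa [hval _ (by omega), decide_eq_false_iff_not] at h
    have h2 : i + ℓ = n ∨ ¬ i + ℓ < j :=
      hright.imp_right fun h => by rwa [hval _ hend, decide_eq_false_iff_not] at h
    omega
  · rintro ⟨rfl, rfl⟩
    refine ⟨hℓ, by omega, fun k hk => ?_, Or.inl rfl, Or.inr ?_⟩
    · rw [zero_add, onesThenFalse_of_lt y hk]
    · rw [zero_add, onesThenFalse_self]

lemma isRunAt_onesThenFalse_add_iff {j n t ℓ : ℕ} (y : ℕ → Bool) :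
    IsRunAt (onesThenFalse j y) n (j + 1 + t) ℓ ↔ IsRunAt y (n - (j + 1)) t ℓ := by
  have hleft : (j + 1 + t = 0 ∨ onesThenFalse j y (j + 1 + t - 1) = false) ↔
      (t = 0 ∨ y (t - 1) = false) := by
    cases t with
    | zero => simp [onesThenFalse_self]
    | succ s => simp [← onesThenFalse_add j y s]
  have hshift (k : ℕ) : onesThenFalse j y (j + 1 + t + k) = y (t + k) := by
    rw [add_assoc, onesThenFalse_add]
  simp only [IsRunAt, hshift, hleft]
  constructor <;> rintro ⟨h1, h2, h3, h4, h5⟩ <;>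
    exact ⟨h1, by omega, h3, h4, h5.imp_left fun h => by omega⟩

lemma runCount_onesThenFalse {j n ℓ : ℕ} (y : ℕ → Bool) (hℓ : 1 ≤ ℓ) (hj : j < n) :
    runCount (onesThenFalse j y) n ℓ = (if j = ℓ then 1 else 0) + runCount y (n - (j + 1)) ℓ := by
  obtain ⟨m, rfl⟩ : ∃ m, n = j + 1 + m := ⟨n - (j + 1), by omega⟩
  rw [runCount, Nat.add_sub_cancel_left, range_add, filter_union,
    card_union_of_disjoint (disjoint_filter_filter (disjoint_range_addLeftEmbedding _ _)),
    filter_map, card_map]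
  congr 1
  · rw [filter_congr fun i hi => isRunAt_onesThenFalse_iff_of_le y hℓ hj (by simp at hi; omega),
      card_filter_range_eq_zero_and _ _ (by omega)]
    simp only [eq_comm]
  · simp only [Function.comp_def, addLeftEmbedding_apply, isRunAt_onesThenFalse_add_iff,
      Nat.add_sub_cancel_left]
    rfl

lemma Pr_runCount_eq {p : ℝ} {ℓ : ℕ} (hℓ : 1 ≤ ℓ) (m n : ℕ) :
    Pr p n {x | runCount x n ℓ = m} = (if (if n = ℓ then 1 else 0) = m then p ^ n else 0) +
      ∑ j ∈ range n, p ^ j * (1 - p) *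
        Pr p (n - (j + 1)) {y | (if j = ℓ then 1 else 0) + runCount y (n - (j + 1)) ℓ = m} := by
  rw [Pr_eq_add_sum_onesThenFalse, Set.mem_ofPred_eq, runCount_allOnes hℓ]
  congr 1
  · congr
  refine sum_congr rfl fun j hj => ?_
  congr 2
  ext y
  simp only [Set.mem_preimage, Set.mem_ofPred_eq, runCount_onesThenFalse y hℓ (mem_range.mp hj)]

lemma Pr_one_add_runCount_eq (p : ℝ) (ℓ m n : ℕ) :
    Pr p n {x | 1 + runCount x n ℓ = m} =
      if m = 0 then 0 else Pr p n {x | runCount x n ℓ = m - 1} := by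
  split_ifs with hm
  · simp [Pr, hm]
  · congr 1
    ext x
    simp only [Set.mem_ofPred_eq]
    omega

lemma summable_pow_mul_Pr {p w : ℝ} (hp0 : 0 ≤ p) (hp1 : p ≤ 1) (hw0 : 0 ≤ w) (hw1 : w < 1)
    (A : ℕ → Set (ℕ → Bool)) : Summable fun n => w ^ n * Pr p n (A n) :=
  Summable.of_nonneg_of_le (fun n => mul_nonneg (pow_nonneg hw0 n) (Pr_mem_Icc hp0 hp1 n _).1)
    (fun n => mul_le_of_le_one_right (pow_nonneg hw0 n) (Pr_mem_Icc hp0 hp1 n _).2)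
    (summable_geometric_of_lt_one hw0 hw1)

lemma hasSum_sum_range_mul_sub_succ {R : Type*} [NormedRing R] [CompleteSpace R] {f g : ℕ → R}
    (hf : Summable fun n => ‖f n‖) (hg : Summable fun n => ‖g n‖) :
    HasSum (fun n => ∑ j ∈ range n, f j * g (n - (j + 1))) ((∑' n, f n) * ∑' n, g n) := by
  rw [← hasSum_nat_add_iff' 1, tsum_mul_tsum_eq_tsum_sum_range_of_summable_norm hf hg]
  simpa using (summable_norm_sum_mul_range_of_summable_norm hf hg).of_norm.hasSum

lemma hasSum_geometric_ite_ne {r : ℝ} (h0 : 0 ≤ r) (h1 : r < 1) (ℓ : ℕ) :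
    HasSum (fun j => if j = ℓ then 0 else r ^ j) ((1 - r)⁻¹ - r ^ ℓ) := by
  refine ((hasSum_geometric_of_lt_one h0 h1).sub (hasSum_ite_eq ℓ (r ^ ℓ))).congr_fun fun j => ?_
  split_ifs with h <;> simp [h]

lemma hasSum_ite_ite_eq_pow {r : ℝ} (h0 : 0 ≤ r) (h1 : r < 1) (ℓ m : ℕ) :
    HasSum (fun n => if (if n = ℓ then 1 else 0) = m then r ^ n else 0)
      (if m = 0 then (1 - r)⁻¹ - r ^ ℓ else if m = 1 then r ^ ℓ else 0) := by
  rcases m with _ | _ | m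
  · refine (hasSum_geometric_ite_ne h0 h1 ℓ).congr_fun fun n => ?_
    split_ifs <;> simp_all
  · refine (hasSum_ite_eq ℓ (r ^ ℓ)).congr_fun fun n => ?_
    split_ifs <;> simp_all
  · exact hasSum_zero.congr_fun fun n => if_neg (by split_ifs <;> simp)

def runGF (p w : ℝ) (ℓ m : ℕ) : ℝ :=
  ∑' n, w ^ n * Pr p n {x | runCount x n ℓ = m}

theorem runGF_eq {p w : ℝ} (hp0 : 0 ≤ p) (hp1 : p ≤ 1) (hw0 : 0 ≤ w) (hw1 : w < 1) {ℓ : ℕ}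
    (hℓ : 1 ≤ ℓ) (m : ℕ) :
    runGF p w ℓ m =
      (if m = 0 then (1 - w * p)⁻¹ - (w * p) ^ ℓ else if m = 1 then (w * p) ^ ℓ else 0) +
      w * (1 - p) * ((1 - w * p)⁻¹ - (w * p) ^ ℓ) * runGF p w ℓ m +
      w * (1 - p) * (w * p) ^ ℓ * (if m = 0 then 0 else runGF p w ℓ (m - 1)) := by
  have hα0 : 0 ≤ w * p := mul_nonneg hw0 hp0
  have hα1 : w * p < 1 := lt_of_le_of_lt (mul_le_of_le_one_right hw0 hp1) hw1
  set a : ℕ → ℝ := fun j => if j = ℓ then 0 else w ^ (j + 1) * (p ^ j * (1 - p))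
  set b : ℕ → ℝ := fun j => if j = ℓ then w ^ (j + 1) * (p ^ j * (1 - p)) else 0
  set f : ℕ → ℝ := fun k => w ^ k * Pr p k {x | runCount x k ℓ = m}
  set g : ℕ → ℝ := fun k => w ^ k * Pr p k {x | 1 + runCount x k ℓ = m}
  have ha : HasSum a (w * (1 - p) * ((1 - w * p)⁻¹ - (w * p) ^ ℓ)) :=
    ((hasSum_geometric_ite_ne hα0 hα1 ℓ).mul_left (w * (1 - p))).congr_fun fun j => by
      by_cases h : j = ℓ
      · simp only [a, h, if_true, mul_zero]
      · simp only [a, h, if_false]; ring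
  have hb : HasSum b (w * (1 - p) * (w * p) ^ ℓ) :=
    (hasSum_ite_eq ℓ _).congr_fun fun j => by
      by_cases h : j = ℓ
      · simp only [b, h, if_true]; ring
      · simp only [b, h, if_false]
  have hf : HasSum f (runGF p w ℓ m) := (summable_pow_mul_Pr hp0 hp1 hw0 hw1 _).hasSum
  have hg : HasSum g (if m = 0 then 0 else runGF p w ℓ (m - 1)) := by
    simp only [g, Pr_one_add_runCount_eq]
    split_ifs
    · simp
    · exact (summable_pow_mul_Pr hp0 hp1 hw0 hw1 _).hasSum
  have hsplit : ∀ n, f n = (if (if n = ℓ then 1 else 0) = m then (w * p) ^ n else 0) +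
      ∑ j ∈ range n, a j * f (n - (j + 1)) + ∑ j ∈ range n, b j * g (n - (j + 1)) := by
    intro n
    simp only [f, Pr_runCount_eq hℓ m n, mul_add, mul_sum, add_assoc, ← sum_add_distrib]
    congr 1
    · split_ifs <;> simp [mul_pow]
    refine sum_congr rfl fun j hj => ?_
    have hw : w ^ n = w ^ (j + 1) * w ^ (n - (j + 1)) := by
      rw [← pow_add, Nat.add_sub_cancel' (mem_range.mp hj)]
    by_cases hjℓ : j = ℓ
    · simp only [a, b, g, hjℓ, if_true, hw]; ring
    · simp only [a, b, hjℓ, if_false, hw, zero_add]; ring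
  have htotal := ((hasSum_ite_ite_eq_pow hα0 hα1 ℓ m).add
    (hasSum_sum_range_mul_sub_succ ha.summable.norm hf.summable.norm)).add
    (hasSum_sum_range_mul_sub_succ hb.summable.norm hg.summable.norm)
  rw [ha.tsum_eq, hb.tsum_eq, hf.tsum_eq, hg.tsum_eq] at htotal
  exact hf.unique (htotal.congr_fun hsplit)

lemma one_add_tsum_ite_succ_ne {r : ℝ} (h0 : 0 ≤ r) (h1 : r < 1) {ℓ : ℕ} (hℓ : 1 ≤ ℓ) :
    1 + ∑' j : ℕ, (if j + 1 = ℓ then 0 else r ^ (j + 1)) = (1 - r)⁻¹ - r ^ ℓ := by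
  have h := (hasSum_nat_add_iff' 1).mpr (hasSum_geometric_ite_ne h0 h1 ℓ)
  rw [h.tsum_eq]
  simp [show 0 ≠ ℓ by omega]

lemma geometric_law_of_recursion {β γ σ a : ℝ} (S : ℕ → ℝ) (hβ : 0 ≤ β) (hγ : 0 < γ) (ha : 0 ≤ a)
    (hsum : (β + γ) * (1 + σ + a) = 1)
    (hrec : ∀ m, S m = (if m = 0 then 1 + σ else if m = 1 then a else 0) + β * (1 + σ) * S m +
      β * a * (if m = 0 then 0 else S (m - 1))) :
    γ * S 0 = γ * (1 + σ) / (1 - β - β * σ) ∧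
      ∀ m, 1 ≤ m → γ * S m = (1 - γ * (1 + σ) / (1 - β - β * σ)) *
        (1 - β * a / (1 - β - β * σ)) * (β * a / (1 - β - β * σ)) ^ (m - 1) := by
  set D := 1 - β - β * σ
  have hD : D = γ * (1 + σ + a) + β * a := by linear_combination -hsum
  have hD0 : 0 < D := by
    have : 0 < 1 + σ + a := pos_of_mul_pos_right (hsum ▸ one_pos) (by linarith)
    rw [hD]; positivity
  have hS0 : S 0 = (1 + σ) / D := by
    have h0 := hrec 0
    rw [if_pos rfl, if_pos rfl, mul_zero, add_zero] at h0
    rw [eq_div_iff hD0.ne']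
    linear_combination h0
  have hS1 : γ * S 1 = (1 - γ * (1 + σ) / D) * (1 - β * a / D) := by
    have h1 := hrec 1
    rw [if_neg one_ne_zero, if_pos rfl, if_neg one_ne_zero, Nat.sub_self, hS0] at h1
    have h1' : S 1 * D ^ 2 = a := by
      field_simp at h1
      linear_combination h1
    field_simp
    rw [hD] at h1' ⊢
    linear_combination γ * h1' - γ * a * hsum
  have hstep (k : ℕ) : S (k + 2) = β * a / D * S (k + 1) := by
    have h := hrec (k + 2)
    rw [if_neg (by omega), if_neg (by omega), if_neg (by omega), show k + 2 - 1 = k + 1 by omega] at h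
    rw [div_mul_eq_mul_div, eq_div_iff hD0.ne']
    linear_combination h
  have hpow (k : ℕ) : S (k + 1) = (β * a / D) ^ k * S 1 := by
    induction k with
    | zero => rw [pow_zero, one_mul]
    | succ k ih => rw [hstep, ih, pow_succ]; ring
  refine ⟨by rw [hS0, mul_div_assoc], fun m hm => ?_⟩
  obtain ⟨k, rfl⟩ : ∃ k, m = k + 1 := ⟨m - 1, by omega⟩
  rw [hpow, Nat.add_sub_cancel, mul_left_comm, hS1]
  ring

/-- `R*_ℓ` has a `Geo(α_ℓ, β_ℓ)` distribution. -/
theorem stmt1 (p w : ℝ) (hp : 0 < p) (hp1 : p < 1) (hw : 0 < w) (hw1 : w < 1)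
    (ℓ : ℕ) (hℓ : 1 ≤ ℓ) :
    ((1 - w) * ∑' n : ℕ, w ^ n * Pr p n {x | runCount x n ℓ = 0} =
      (1 - w) * (1 + ∑' j : ℕ, if j + 1 = ℓ then 0 else (w * p) ^ (j + 1)) /
        (1 - w * (1 - p) -
          w * (1 - p) * ∑' j : ℕ, if j + 1 = ℓ then 0 else (w * p) ^ (j + 1))) ∧
    ∀ m : ℕ, 1 ≤ m →
      (1 - w) * ∑' n : ℕ, w ^ n * Pr p n {x | runCount x n ℓ = m} =
        (1 - (1 - w) * (1 + ∑' j : ℕ, if j + 1 = ℓ then 0 else (w * p) ^ (j + 1)) /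
            (1 - w * (1 - p) -
              w * (1 - p) * ∑' j : ℕ, if j + 1 = ℓ then 0 else (w * p) ^ (j + 1))) *
        (1 - w * (1 - p) * (w * p) ^ ℓ /
            (1 - w * (1 - p) -
              w * (1 - p) * ∑' j : ℕ, if j + 1 = ℓ then 0 else (w * p) ^ (j + 1))) *
        (w * (1 - p) * (w * p) ^ ℓ /
            (1 - w * (1 - p) -
              w * (1 - p) * ∑' j : ℕ, if j + 1 = ℓ then 0 else (w * p) ^ (j + 1))) ^ (m - 1) := by
  have hα0 : 0 ≤ w * p := by positivity
  have hα1 : w * p < 1 := by nlinarith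
  have hσ := one_add_tsum_ite_succ_ne hα0 hα1 hℓ
  have hrec := runGF_eq hp.le hp1.le hw.le hw1 hℓ
  simp only [← hσ] at hrec
  refine geometric_law_of_recursion (runGF p w ℓ) (by nlinarith) (by linarith) (by positivity)
    ?_ hrec
  rw [hσ, sub_add_cancel, show w * (1 - p) + (1 - w) = 1 - w * p by ring,
    mul_inv_cancel₀ (by linarith)]
end
end

section
/- Let L(n) be the length of the longest run of 1's in the first n tosses of an i.i.d. Bernoulli(p) sequence, and N* an independent geometric(w) random variable. Then for every ℓ ≥ 1, P(L(N*-1) < ℓ) = (1-w)(1-(wp)^ℓ) / (1 - w + wq·(wp)^ℓ), where q = 1-p. -/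
/-!
Let `a n` be the probability that the first `n` tosses contain no `ℓ` heads in a row. Then
`a n = 1` for `n < ℓ`, `a ℓ = 1 - p ^ ℓ`, and `a (ℓ + m + 1) = a (ℓ + m) - q p ^ ℓ a m`, since a
first run of `ℓ` heads completed at toss `ℓ + m + 1` is preceded by a tail at toss `m` and a
run-free prefix. Multiplying by `w ^ n` and summing, the generating function `G = ∑ w ^ n a n`
satisfies `G (1 - w + q p ^ ℓ w ^ (ℓ + 1)) = 1 - (w p) ^ ℓ`, and `(1 - w) G` is the probability
that `L(N* - 1) < ℓ`.
-/

open scoped Classical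
open Finset Filter

noncomputable section

lemma wt_snoc (p : ℝ) {n : ℕ} (x : Fin n → Bool) (b : Bool) :
    wt p (Fin.snoc x b) = wt p x * (if b then p else 1 - p) := by
  simp [wt, Fin.prod_univ_castSucc, Fin.snoc_castSucc]

lemma wt_nonneg {p : ℝ} (hp0 : 0 ≤ p) (hp1 : p ≤ 1) {n : ℕ} (x : Fin n → Bool) :
    0 ≤ wt p x :=
  Finset.prod_nonneg fun i _ => by split_ifs <;> linarith

lemma pad_snoc_of_lt {n : ℕ} (x : Fin n → Bool) (b : Bool) {i : ℕ} (h : i < n) :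
    pad (Fin.snoc x b : Fin (n + 1) → Bool) i = pad x i := by
  simp only [pad, dif_pos h, dif_pos (Nat.lt_succ_of_lt h)]
  exact Fin.snoc_castSucc (α := fun _ => Bool) (i := ⟨i, h⟩) ..

lemma pad_snoc_self {n : ℕ} (x : Fin n → Bool) (b : Bool) :
    pad (Fin.snoc x b : Fin (n + 1) → Bool) n = b := by
  simp only [pad, dif_pos (Nat.lt_succ_self n)]
  exact Fin.snoc_last (α := fun _ => Bool) ..

lemma sum_snoc {M : Type*} [AddCommMonoid M] {n : ℕ} (F : (Fin (n + 1) → Bool) → M) :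
    ∑ x : Fin (n + 1) → Bool, F x
      = ∑ y : Fin n → Bool, (F (Fin.snoc y false) + F (Fin.snoc y true)) := by
  rw [← Fintype.sum_equiv (Fin.snocEquiv fun _ => Bool) (fun z => F (Fin.snoc z.2 z.1)) F
    fun _ => rfl, Fintype.sum_prod_type, Fintype.sum_bool, ← Finset.sum_add_distrib]
  exact Finset.sum_congr rfl fun _ _ => add_comm _ _

lemma sum_wt (p : ℝ) (n : ℕ) : ∑ x : Fin n → Bool, wt p x = 1 := by
  induction n with
  | zero => simp [wt]
  | succ n ih =>
    rw [sum_snoc, ← ih]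
    refine Finset.sum_congr rfl fun y _ => ?_
    simp only [wt_snoc, Bool.false_eq_true, if_false, if_true]
    ring

section Pr

variable (p : ℝ) (n : ℕ)

lemma Pr_univ : Pr p n Set.univ = 1 := by
  simp [Pr, sum_wt]

lemma Pr_union {A B : Set (ℕ → Bool)} (hAB : Disjoint A B) :
    Pr p n (A ∪ B) = Pr p n A + Pr p n B := by
  simp only [Pr, ← Finset.sum_add_distrib]
  refine Finset.sum_congr rfl fun x _ => ?_
  by_cases hA : pad x ∈ A
  · simp [hA, Set.disjoint_left.mp hAB hA]
  · by_cases hB : pad x ∈ B <;> simp [hA, hB]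

variable {p}

lemma Pr_nonneg (hp0 : 0 ≤ p) (hp1 : p ≤ 1) (A : Set (ℕ → Bool)) : 0 ≤ Pr p n A :=
  Finset.sum_nonneg fun x _ => by split_ifs <;> simp [wt_nonneg hp0 hp1]

lemma Pr_le_one (hp0 : 0 ≤ p) (hp1 : p ≤ 1) (A : Set (ℕ → Bool)) : Pr p n A ≤ 1 := by
  rw [← sum_wt p n]
  exact Finset.sum_le_sum fun x _ => by split_ifs <;> simp [wt_nonneg hp0 hp1]

end Pr

def DependsOnPrefix (n : ℕ) (A : Set (ℕ → Bool)) : Prop :=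
  ∀ x y : ℕ → Bool, (∀ i < n, x i = y i) → (x ∈ A ↔ y ∈ A)

namespace DependsOnPrefix

variable {n : ℕ} {A B : Set (ℕ → Bool)}

lemma mono {m : ℕ} (hA : DependsOnPrefix n A) (hnm : n ≤ m) : DependsOnPrefix m A :=
  fun x y hxy => hA x y fun i hi => hxy i (lt_of_lt_of_le hi hnm)

lemma inter (hA : DependsOnPrefix n A) (hB : DependsOnPrefix n B) :
    DependsOnPrefix n (A ∩ B) :=
  fun x y hxy => and_congr (hA x y hxy) (hB x y hxy)

lemma inter_eval (hA : DependsOnPrefix n A) (b : Bool) :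
    DependsOnPrefix (n + 1) (A ∩ {x | x n = b}) :=
  fun x y hxy => and_congr (hA x y fun i hi => hxy i (by omega))
    (by simp only [Set.mem_ofPred_eq, hxy n (by omega)])

lemma Pr_inter_eval (p : ℝ) (hA : DependsOnPrefix n A) (b : Bool) :
    Pr p (n + 1) (A ∩ {x | x n = b}) = Pr p n A * (if b then p else 1 - p) := by
  simp only [Pr, sum_snoc, Finset.sum_mul]
  refine Finset.sum_congr rfl fun y _ => ?_
  have hmem : ∀ c, pad (Fin.snoc y c : Fin (n + 1) → Bool) ∈ A ↔ pad y ∈ A :=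
    fun c => hA _ _ fun i hi => pad_snoc_of_lt y c hi
  by_cases h : pad y ∈ A <;> cases b <;> simp [hmem, h, pad_snoc_self, wt_snoc]

lemma Pr_succ (p : ℝ) (hA : DependsOnPrefix n A) : Pr p (n + 1) A = Pr p n A := by
  have hsplit : A = (A ∩ {x | x n = false}) ∪ (A ∩ {x | x n = true}) := by
    ext x; cases h : x n <;> simp [h]
  have hdisj : Disjoint (A ∩ {x | x n = false}) (A ∩ {x | x n = true}) :=
    Set.disjoint_left.mpr fun x ⟨_, h₁⟩ ⟨_, h₂⟩ => Bool.false_ne_true (h₁.symm.trans h₂)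
  calc Pr p (n + 1) A
      = Pr p (n + 1) ((A ∩ {x | x n = false}) ∪ (A ∩ {x | x n = true})) := by rw [← hsplit]
    _ = Pr p n A := by
      rw [Pr_union _ _ hdisj, hA.Pr_inter_eval, hA.Pr_inter_eval]
      simp only [Bool.false_eq_true, if_false, if_true]
      ring

end DependsOnPrefix

def headsBlock (n j : ℕ) : Set (ℕ → Bool) := {x | ∀ k < j, x (n + k) = true}

lemma headsBlock_zero (n : ℕ) : headsBlock n 0 = Set.univ := by
  simp [headsBlock]

lemma headsBlock_succ (n j : ℕ) :
    headsBlock n (j + 1) = headsBlock n j ∩ {x | x (n + j) = true} := by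
  ext x
  simp only [headsBlock, Set.mem_inter_iff, Set.mem_ofPred_eq, Nat.lt_succ_iff_lt_or_eq]
  grind

lemma dependsOnPrefix_headsBlock (n j : ℕ) : DependsOnPrefix (n + j) (headsBlock n j) :=
  fun x y hxy => forall₂_congr fun k hk => by rw [hxy (n + k) (by omega)]

lemma DependsOnPrefix.Pr_inter_headsBlock (p : ℝ) {n : ℕ} {A : Set (ℕ → Bool)}
    (hA : DependsOnPrefix n A) (j : ℕ) :
    Pr p (n + j) (A ∩ headsBlock n j) = Pr p n A * p ^ j := by
  induction j with
  | zero => simp [headsBlock_zero]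
  | succ j ih =>
    have hdep : DependsOnPrefix (n + j) (A ∩ headsBlock n j) :=
      (hA.mono (Nat.le_add_right n j)).inter (dependsOnPrefix_headsBlock n j)
    rw [headsBlock_succ, ← Set.inter_assoc, ← add_assoc, hdep.Pr_inter_eval, ih]
    simp [pow_succ, mul_assoc]

lemma Pr_headsBlock_zero (p : ℝ) (j : ℕ) : Pr p j (headsBlock 0 j) = p ^ j := by
  have h : DependsOnPrefix 0 (Set.univ : Set (ℕ → Bool)) := fun _ _ _ => Iff.rfl
  simpa [Pr_univ] using h.Pr_inter_headsBlock p j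

def noRun (ℓ n : ℕ) : Set (ℕ → Bool) := {x | ∀ i, i + ℓ ≤ n → ∃ k < ℓ, x (i + k) = false}

lemma longestRun_lt_iff_mem_noRun {x : ℕ → Bool} {n ℓ : ℕ} :
    longestRun x n < ℓ ↔ x ∈ noRun ℓ n := by
  rcases Nat.eq_zero_or_pos ℓ with rfl | hℓ
  · simpa [noRun] using ⟨0, Nat.zero_le n⟩
  simp only [noRun, longestRun, Finset.sup_lt_iff (show ⊥ < ℓ from hℓ), Finset.mem_range,
    Set.mem_ofPred_eq]
  constructor
  · intro h i hi
    by_contra! hrun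
    have := h ℓ (by omega)
    rw [if_pos ⟨i, hi, fun k hk => by simpa using hrun k hk⟩] at this
    exact lt_irrefl ℓ this
  · intro h m hm
    split_ifs with hrun
    · obtain ⟨i, him, hall⟩ := hrun
      by_contra! hle
      obtain ⟨k, hk, hf⟩ := h i (by omega)
      simp [hall k (by omega)] at hf
    · exact hℓ

lemma noRun_anti {ℓ n n' : ℕ} (h : n ≤ n') : noRun ℓ n' ⊆ noRun ℓ n :=
  fun _ hx i hi => hx i (hi.trans h)

lemma noRun_of_lt {ℓ n : ℕ} (h : n < ℓ) : noRun ℓ n = Set.univ :=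
  Set.eq_univ_of_forall fun _ i hi => absurd hi (by omega)

lemma dependsOnPrefix_noRun (ℓ n : ℕ) : DependsOnPrefix n (noRun ℓ n) :=
  fun x y hxy => forall₂_congr fun i hi =>
    exists_congr fun k => and_congr_right fun hk => by rw [hxy (i + k) (by omega)]

lemma disjoint_noRun_headsBlock {ℓ n i : ℕ} (h : i + ℓ ≤ n) :
    Disjoint (noRun ℓ n) (headsBlock i ℓ) :=
  Set.disjoint_left.mpr fun x hx hheads => by
    obtain ⟨k, hk, hf⟩ := hx i h
    simp [hheads k hk] at hf

lemma noRun_self_union_headsBlock (ℓ : ℕ) : noRun ℓ ℓ ∪ headsBlock 0 ℓ = Set.univ := by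
  refine Set.eq_univ_of_forall fun x => ?_
  by_cases hheads : x ∈ headsBlock 0 ℓ
  · exact Or.inr hheads
  · obtain ⟨k, hk, hf⟩ : ∃ k < ℓ, x k = false := by simpa [headsBlock] using hheads
    exact Or.inl fun i hi => ⟨k, hk, by rwa [show i = 0 by omega, zero_add]⟩

/-- A first run of `ℓ` heads ending at toss `ℓ + m + 1` occupies the tosses `m + 1, …, m + ℓ`,
so it is preceded by a tail at `m` and a run-free prefix of length `m`. -/
lemma noRun_add_eq_union (ℓ m : ℕ) :
    noRun ℓ (ℓ + m) =
      noRun ℓ (ℓ + m + 1) ∪ (noRun ℓ m ∩ {x | x m = false}) ∩ headsBlock (m + 1) ℓ := by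
  ext x
  constructor
  · intro hx
    by_cases hx' : x ∈ noRun ℓ (ℓ + m + 1)
    · exact Or.inl hx'
    obtain ⟨i, hi, hheads⟩ : ∃ i, i + ℓ ≤ ℓ + m + 1 ∧ ∀ k < ℓ, x (i + k) = true := by
      simpa [noRun] using hx'
    have him : i = m + 1 := by
      by_contra hne
      obtain ⟨k, hk, hf⟩ := hx i (by omega)
      simp [hheads k hk] at hf
    subst him
    refine Or.inr ⟨⟨noRun_anti (by omega) hx, ?_⟩, hheads⟩
    obtain ⟨k, hk, hf⟩ := hx m (by omega)
    rcases k with _ | k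
    · exact hf
    · simp [show m + (k + 1) = m + 1 + k by omega, hheads k (by omega)] at hf
  · rintro (hx | ⟨⟨hx, hm⟩, -⟩)
    · exact noRun_anti (by omega) hx
    · intro i hi
      by_cases him : i + ℓ ≤ m
      · exact hx i him
      · exact ⟨m - i, by omega, by rwa [Nat.add_sub_cancel' (by omega)]⟩

section noRunProb

variable (p : ℝ) (ℓ : ℕ)

lemma Pr_noRun_of_lt {n : ℕ} (h : n < ℓ) : Pr p n (noRun ℓ n) = 1 := by
  rw [noRun_of_lt h, Pr_univ]

lemma Pr_noRun_self : Pr p ℓ (noRun ℓ ℓ) = 1 - p ^ ℓ := by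
  have h := Pr_union p ℓ (disjoint_noRun_headsBlock (zero_add ℓ).le)
  rw [noRun_self_union_headsBlock, Pr_univ, Pr_headsBlock_zero] at h
  linarith

lemma Pr_noRun_add_succ (m : ℕ) :
    Pr p (ℓ + m + 1) (noRun ℓ (ℓ + m + 1)) =
      Pr p (ℓ + m) (noRun ℓ (ℓ + m)) - (1 - p) * p ^ ℓ * Pr p m (noRun ℓ m) := by
  have hG : Pr p (ℓ + m + 1) ((noRun ℓ m ∩ {x | x m = false}) ∩ headsBlock (m + 1) ℓ) =
      (1 - p) * p ^ ℓ * Pr p m (noRun ℓ m) := by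
    have hdep := dependsOnPrefix_noRun ℓ m
    rw [show ℓ + m + 1 = m + 1 + ℓ by omega, (hdep.inter_eval false).Pr_inter_headsBlock,
      hdep.Pr_inter_eval]
    simp only [Bool.false_eq_true, if_false]
    ring
  have hsplit := Pr_union p (ℓ + m + 1)
    ((disjoint_noRun_headsBlock (ℓ := ℓ) (n := ℓ + m + 1) (i := m + 1) (by omega)).mono_right
      (Set.inter_subset_right (s := noRun ℓ m ∩ {x | x m = false})))
  rw [← noRun_add_eq_union, (dependsOnPrefix_noRun ℓ (ℓ + m)).Pr_succ, hG] at hsplit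
  linarith

end noRunProb

lemma tsum_pow_mul_mul_eq_of_recurrence {a : ℕ → ℝ} {w c d : ℝ} {ℓ : ℕ}
    (hsum : Summable fun n => w ^ n * a n)
    (hinit : ∀ n < ℓ, a n = 1) (hℓ : a ℓ = 1 - d)
    (hrec : ∀ m, a (ℓ + m + 1) = a (ℓ + m) - c * a m) :
    (∑' n, w ^ n * a n) * (1 - w + c * w ^ (ℓ + 1)) = 1 - w ^ ℓ * d := by
  have hhead : ∑ i ∈ Finset.range ℓ, w ^ i * a i = ∑ i ∈ Finset.range ℓ, w ^ i :=
    Finset.sum_congr rfl fun i hi => by rw [hinit i (Finset.mem_range.mp hi), mul_one]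
  have hsplit₀ := hsum.sum_add_tsum_nat_add ℓ
  have hsplit₁ := hsum.sum_add_tsum_nat_add (ℓ + 1)
  rw [hhead] at hsplit₀
  rw [Finset.sum_range_succ, hhead, hℓ] at hsplit₁
  have htail : ∑' n, w ^ (n + (ℓ + 1)) * a (n + (ℓ + 1)) =
      w * ∑' n, w ^ (n + ℓ) * a (n + ℓ) - c * w ^ (ℓ + 1) * ∑' n, w ^ n * a n := by
    rw [← tsum_mul_left, ← tsum_mul_left,
      ← Summable.tsum_sub (((summable_nat_add_iff ℓ).mpr hsum).mul_left w) (hsum.mul_left _)]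
    refine tsum_congr fun n => ?_
    rw [show n + (ℓ + 1) = ℓ + n + 1 by omega, show n + ℓ = ℓ + n by omega, hrec]
    ring
  linear_combination w * hsplit₀ - hsplit₁ + htail - geom_sum_mul w ℓ

theorem stmt2_general (p w : ℝ) (hp : 0 < p) (hp1 : p < 1) (hw : 0 < w) (hw1 : w < 1)
    (ℓ : ℕ) :
    (1 - w) * ∑' n : ℕ, w ^ n * Pr p n {x | longestRun x n < ℓ} =
      (1 - w) * (1 - (w * p) ^ ℓ) / (1 - w + w * (1 - p) * (w * p) ^ ℓ) := by
  have hD : 0 < 1 - w + w * (1 - p) * (w * p) ^ ℓ := by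
    have : 0 < 1 - p := by linarith
    have : 0 < w * (1 - p) * (w * p) ^ ℓ := by positivity
    linarith
  have key := tsum_pow_mul_mul_eq_of_recurrence
    (summable_pow_mul_Pr hp.le hp1.le hw.le hw1 fun n => noRun ℓ n)
    (fun _ => Pr_noRun_of_lt p ℓ) (Pr_noRun_self p ℓ) (Pr_noRun_add_succ p ℓ)
  simp_rw [longestRun_lt_iff_mem_noRun, Set.ofPred_mem_eq]
  rw [eq_div_iff hD.ne']
  linear_combination (1 - w) * key

/-- distribution function of the longest run at an independent geometric time. -/
theorem stmt2 (p w : ℝ) (hp : 0 < p) (hp1 : p < 1) (hw : 0 < w) (hw1 : w < 1)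
    (ℓ : ℕ) (hℓ : 1 ≤ ℓ) :
    (1 - w) * ∑' n : ℕ, w ^ n * Pr p n {x | longestRun x n < ℓ} =
      (1 - w) * (1 - (w * p) ^ ℓ) / (1 - w + w * (1 - p) * (w * p) ^ ℓ) :=
  stmt2_general p w hp hp1 hw hw1 ℓ
end
end

section
/- Fix 0 < p < 1 and θ > 0, and let ℓ(n) → ∞ satisfy n p^{ℓ(n)} q → θ as n → ∞. Then for every fixed r ≥ 1, E[C(G_{ℓ(n)}(n), r)] → θ^r / r!, and consequently P(G_{ℓ(n)}(n) = 0) = P(L(n) < ℓ(n)) → e^{-θ}. -/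
open scoped Classical
open Finset Filter

noncomputable section

lemma Ex_mono {p : ℝ} (hp0 : 0 ≤ p) (hp1 : p ≤ 1) {n : ℕ} {f g : (ℕ → Bool) → ℝ}
    (h : ∀ y, f y ≤ g y) : Ex p n f ≤ Ex p n g :=
  sum_le_sum fun x _ => mul_le_mul_of_nonneg_left (h (pad x)) (wt_nonneg hp0 hp1 x)

lemma Ex_sum {p : ℝ} {n : ℕ} {ι : Type*} (s : Finset ι) (f : ι → (ℕ → Bool) → ℝ) :
    Ex p n (fun x => ∑ i ∈ s, f i x) = ∑ i ∈ s, Ex p n (f i) := by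
  simp only [Ex, mul_sum]
  exact sum_comm

lemma Ex_const_mul {p : ℝ} {n : ℕ} (c : ℝ) (f : (ℕ → Bool) → ℝ) :
    Ex p n (fun x => c * f x) = c * Ex p n f := by
  simp only [Ex, mul_sum]
  exact sum_congr rfl fun x _ => mul_left_comm _ _ _

lemma Pr_eq_Ex (p : ℝ) (n : ℕ) (A : Set (ℕ → Bool)) :
    Pr p n A = Ex p n (fun x => if x ∈ A then 1 else 0) := by
  simp only [Pr, Ex, mul_ite, mul_one, mul_zero]

lemma Ex_cylinder (p : ℝ) {n : ℕ} {S : Finset ℕ} (hS : S ⊆ range n) (b : ℕ → Bool) :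
    Ex p n (fun y => if ∀ m ∈ S, y m = b m then 1 else 0) =
      ∏ m ∈ S, (if b m then p else 1 - p) := by
  set w : Bool → ℝ := fun c => if c then p else 1 - p
  have hfactor : ∀ x : Fin n → Bool, wt p x * (if ∀ m ∈ S, pad x m = b m then 1 else 0) =
      ∏ i : Fin n, w (x i) * (if (i : ℕ) ∈ S ∧ x i ≠ b i then 0 else 1) := by
    intro x
    rw [prod_mul_distrib]
    congr 1
    split_ifs with h
    · refine (prod_eq_one fun i _ => if_neg ?_).symm
      rintro ⟨hi, hne⟩
      exact hne (by simpa [pad] using h i hi)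
    · push Not at h
      obtain ⟨m, hm, hne⟩ := h
      have hmn : m < n := mem_range.1 (hS hm)
      symm
      apply prod_eq_zero (mem_univ (⟨m, hmn⟩ : Fin n))
      exact if_pos ⟨hm, by simpa [pad, hmn] using hne⟩
  have hcoord : ∀ i : Fin n, ∑ c, w c * (if (i : ℕ) ∈ S ∧ c ≠ b i then 0 else 1) =
      if (i : ℕ) ∈ S then w (b i) else 1 := by
    intro i
    by_cases hi : (i : ℕ) ∈ S <;> cases b i <;> simp [w, hi]
  calc Ex p n (fun y => if ∀ m ∈ S, y m = b m then 1 else 0)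
      = ∏ i : Fin n, ∑ c, w c * (if (i : ℕ) ∈ S ∧ c ≠ b i then 0 else 1) := by
        rw [Fintype.prod_sum]
        exact sum_congr rfl fun x _ => hfactor x
    _ = ∏ m ∈ range n, if m ∈ S then w (b m) else 1 := by
        simp only [hcoord]
        exact Fin.prod_univ_eq_prod_range (fun m => if m ∈ S then w (b m) else 1) n
    _ = ∏ m ∈ S, w (b m) := by rw [prod_ite_mem, inter_eq_right.2 hS]

lemma Ex_one (p : ℝ) (n : ℕ) : Ex p n (fun _ => 1) = 1 := by
  simpa using Ex_cylinder p (empty_subset (range n)) (fun _ => false)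

def IsLongRunAt (x : ℕ → Bool) (n i ℓ : ℕ) : Prop :=
  i + ℓ ≤ n ∧ (∀ k < ℓ, x (i + k) = true) ∧ (i = 0 ∨ x (i - 1) = false)

lemma IsLongRunAt.exists_isRunAt {x : ℕ → Bool} {n i ℓ : ℕ} (hℓ : 1 ≤ ℓ)
    (h : IsLongRunAt x n i ℓ) : ∃ k ∈ Icc ℓ n, IsRunAt x n i k := by
  obtain ⟨hin, hones, hstart⟩ := h
  have hend : ∃ j, n ≤ i + j ∨ x (i + j) = false := ⟨n - i, Or.inl (by omega)⟩
  set k := Nat.find hend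
  have hk : n ≤ i + k ∨ x (i + k) = false := Nat.find_spec hend
  have hbefore : ∀ j < k, i + j < n ∧ x (i + j) = true := fun j hj => by
    simpa using Nat.find_min hend hj
  have hℓk : ℓ ≤ k := Nat.le_find_iff _ _ |>.2 fun j hj => by
    simpa [not_or] using And.intro (show i + j < n by omega) (hones j hj)
  have hkn : i + k ≤ n := by
    have : k ≤ n - i := Nat.find_le (Or.inl (by omega))
    omega
  refine ⟨k, mem_Icc.2 ⟨hℓk, by omega⟩, by omega, hkn, fun j hj => (hbefore j hj).2, hstart, ?_⟩
  rcases hk with hk | hk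
  · exact Or.inl (by omega)
  · exact Or.inr hk

lemma IsRunAt.length_eq {x : ℕ → Bool} {n i a b : ℕ} (ha : IsRunAt x n i a)
    (hb : IsRunAt x n i b) : a = b := by
  have key : ∀ {a b}, IsRunAt x n i a → IsRunAt x n i b → ¬a < b := by
    rintro a b ⟨-, -, -, -, hend⟩ ⟨-, hbn, hones, -, -⟩ hab
    have := hones a hab
    rcases hend with h | h
    · omega
    · simp_all
  exact le_antisymm (not_lt.1 (key hb ha)) (not_lt.1 (key ha hb))

lemma excCount_eq_card_isLongRunAt (x : ℕ → Bool) (n : ℕ) {ℓ : ℕ} (hℓ : 1 ≤ ℓ) :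
    excCount x n ℓ = #{i ∈ range n | IsLongRunAt x n i ℓ} := by
  unfold excCount runCount
  rw [← card_biUnion]
  · congr 1
    ext i
    simp only [mem_biUnion, mem_filter, mem_Icc, mem_range]
    constructor
    · rintro ⟨k, ⟨hℓk, -⟩, hi, -, hkn, hones, hstart, -⟩
      exact ⟨hi, by omega, fun j hj => hones j (by omega), hstart⟩
    · rintro ⟨hi, hrun⟩
      obtain ⟨k, hk, hrunk⟩ := hrun.exists_isRunAt hℓ
      exact ⟨k, mem_Icc.1 hk, hi, hrunk⟩
  · intro a _ b _ hab
    simp only [Function.onFun, disjoint_left, mem_filter]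
    exact fun i ⟨_, ha⟩ ⟨_, hb⟩ => hab (ha.length_eq hb)

lemma le_longestRun_iff {x : ℕ → Bool} {n ℓ : ℕ} (hℓ : 1 ≤ ℓ) :
    ℓ ≤ longestRun x n ↔ ∃ i, i + ℓ ≤ n ∧ ∀ k < ℓ, x (i + k) = true := by
  rw [longestRun, Finset.le_sup_iff (show (⊥ : ℕ) < ℓ from hℓ)]
  constructor
  · rintro ⟨m, hm, hle⟩
    split_ifs at hle with h
    · obtain ⟨i, hi, hones⟩ := h
      exact ⟨i, by omega, fun k hk => hones k (by omega)⟩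
    · omega
  · rintro ⟨i, hi, hones⟩
    exact ⟨ℓ, mem_range.2 (by omega), by rw [if_pos ⟨i, hi, hones⟩]⟩

lemma exists_isLongRunAt_of_ones {x : ℕ → Bool} {n ℓ i : ℕ} (hin : i + ℓ ≤ n)
    (hones : ∀ k < ℓ, x (i + k) = true) : ∃ j, IsLongRunAt x n j ℓ := by
  induction i with
  | zero => exact ⟨0, hin, hones, Or.inl rfl⟩
  | succ i ih =>
    by_cases hprev : x i = false
    · exact ⟨i + 1, hin, hones, Or.inr hprev⟩
    · refine ih (by omega) fun k hk => ?_
      rcases k with _ | k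
      · simpa using hprev
      · simpa [Nat.add_right_comm, Nat.add_assoc] using hones k (by omega)

lemma longestRun_lt_iff_excCount_eq_zero (x : ℕ → Bool) (n : ℕ) {ℓ : ℕ} (hℓ : 1 ≤ ℓ) :
    longestRun x n < ℓ ↔ excCount x n ℓ = 0 := by
  rw [← not_le, le_longestRun_iff hℓ, excCount_eq_card_isLongRunAt x n hℓ, card_eq_zero,
    filter_eq_empty_iff]
  constructor
  · exact fun h i _ hrun => h ⟨i, hrun.1, hrun.2.1⟩
  · rintro h ⟨i, hin, hones⟩
    obtain ⟨j, hj⟩ := exists_isLongRunAt_of_ones hin hones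
    exact h (mem_range.2 (by have := hj.1; omega)) hj

def Separated (ℓ : ℕ) (T : Finset ℕ) : Prop :=
  ∀ i ∈ T, ∀ j ∈ T, i < j → i + ℓ < j

/-- The `r`-sets of positions that can simultaneously start runs of length at least `ℓ` in `n`
tosses (`i < n + 1 - ℓ` means `i + ℓ ≤ n`). -/
def separatedSets (n ℓ r : ℕ) : Finset (Finset ℕ) :=
  {T ∈ (range (n + 1 - ℓ)).powersetCard r | Separated ℓ T}

/-- The ones of a run starting at `i` and the zero before it; for `i = 0` the truncated
subtraction leaves out that zero. -/
def runBlock (ℓ i : ℕ) : Finset ℕ := Ico (i - 1) (i + ℓ)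

def runPattern (ℓ : ℕ) (T : Finset ℕ) (m : ℕ) : Bool :=
  decide (∃ i ∈ T, i ≤ m ∧ m < i + ℓ)

lemma isLongRunAt_iff_runBlock {x : ℕ → Bool} {n i ℓ : ℕ} (hin : i + ℓ ≤ n) :
    IsLongRunAt x n i ℓ ↔ ∀ m ∈ runBlock ℓ i, x m = decide (i ≤ m) := by
  simp only [IsLongRunAt, runBlock, mem_Ico, hin, true_and]
  constructor
  · rintro ⟨hones, hstart⟩ m ⟨hm₁, hm₂⟩
    by_cases him : i ≤ m
    · simpa [him, Nat.add_sub_cancel' him] using hones (m - i) (by omega)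
    · rcases hstart with h | h
      · omega
      · rwa [decide_eq_false him, show m = i - 1 by omega]
  · intro h
    refine ⟨fun k hk => by simpa using h (i + k) ⟨by omega, by omega⟩, ?_⟩
    rcases Nat.eq_zero_or_pos i with h0 | h0
    · exact Or.inl h0
    · exact Or.inr (by simpa [show ¬i ≤ i - 1 by omega] using h (i - 1) ⟨le_rfl, by omega⟩)

lemma runPattern_of_mem_runBlock {ℓ i m : ℕ} {T : Finset ℕ} (hT : Separated ℓ T) (hi : i ∈ T)
    (hm : m ∈ runBlock ℓ i) : runPattern ℓ T m = decide (i ≤ m) := by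
  rw [runBlock, mem_Ico] at hm
  rw [runPattern, decide_eq_decide]
  refine ⟨fun ⟨j, hj, hjm, hmj⟩ => ?_, fun him => ⟨i, hi, him, hm.2⟩⟩
  by_contra him
  have := hT j hj i hi (by omega)
  omega

lemma pairwiseDisjoint_runBlock {ℓ : ℕ} {T : Finset ℕ} (hT : Separated ℓ T) :
    (T : Set ℕ).PairwiseDisjoint (runBlock ℓ) := by
  intro i hi j hj hij
  simp only [Function.onFun, disjoint_left, runBlock, mem_Ico]
  rcases lt_or_gt_of_ne hij with h | h
  · have := hT i hi j hj h
    omega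
  · have := hT j hj i hi h
    omega

lemma prod_runBlock (p : ℝ) (ℓ i : ℕ) :
    ∏ m ∈ runBlock ℓ i, (if i ≤ m then p else 1 - p) = p ^ ℓ * (if i = 0 then 1 else 1 - p) := by
  rcases i with _ | i
  · simp [runBlock]
  · rw [runBlock, Nat.add_sub_cancel, ← insert_Ico_add_one_left_eq_Ico (by omega),
      prod_insert (by simp), prod_congr rfl fun m hm => if_pos (mem_Ico.1 hm).1]
    simp [mul_comm]

lemma mem_separatedSets_of_forall_isLongRunAt {x : ℕ → Bool} {n ℓ r : ℕ} {T : Finset ℕ}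
    (hT : T ∈ (range n).powersetCard r) (hrun : ∀ i ∈ T, IsLongRunAt x n i ℓ) :
    T ∈ separatedSets n ℓ r := by
  rw [mem_powersetCard] at hT
  refine mem_filter.2 ⟨mem_powersetCard.2 ⟨fun i hi => ?_, hT.2⟩, fun i hi j hj hij => ?_⟩
  · have := (hrun i hi).1
    exact mem_range.2 (by omega)
  · by_contra hle
    have hone := (hrun i hi).2.1 (j - 1 - i) (by omega)
    rcases (hrun j hj).2.2 with h | h
    · omega
    · rw [show i + (j - 1 - i) = j - 1 by omega, h] at hone
      exact Bool.false_ne_true hone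

lemma Ex_forall_isLongRunAt (p : ℝ) {n ℓ r : ℕ} {T : Finset ℕ} (hT : T ∈ separatedSets n ℓ r) :
    Ex p n (fun x => if ∀ i ∈ T, IsLongRunAt x n i ℓ then 1 else 0) =
      p ^ (ℓ * r) * (1 - p) ^ #(T.erase 0) := by
  obtain ⟨hTsub, hcard⟩ := mem_powersetCard.1 (mem_filter.1 hT).1
  have hsep : Separated ℓ T := (mem_filter.1 hT).2
  have hroom : ∀ i ∈ T, i + ℓ ≤ n := fun i hi => by
    have := mem_range.1 (hTsub hi)
    omega
  have hevent : ∀ x : ℕ → Bool, (∀ i ∈ T, IsLongRunAt x n i ℓ) ↔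
      ∀ m ∈ T.biUnion (runBlock ℓ), x m = runPattern ℓ T m := fun x => by
    constructor
    · intro h m hm
      obtain ⟨i, hi, hmi⟩ := mem_biUnion.1 hm
      rw [runPattern_of_mem_runBlock hsep hi hmi]
      exact (isLongRunAt_iff_runBlock (hroom i hi)).1 (h i hi) m hmi
    · refine fun h i hi => (isLongRunAt_iff_runBlock (hroom i hi)).2 fun m hm => ?_
      rw [← runPattern_of_mem_runBlock hsep hi hm]
      exact h m (mem_biUnion.2 ⟨i, hi, hm⟩)
  have hsupp : T.biUnion (runBlock ℓ) ⊆ range n := biUnion_subset.2 fun i hi m hm => by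
    have := hroom i hi
    rw [runBlock, mem_Ico] at hm
    exact mem_range.2 (by omega)
  simp only [hevent]
  rw [Ex_cylinder p hsupp, prod_biUnion (pairwiseDisjoint_runBlock hsep)]
  calc ∏ i ∈ T, ∏ m ∈ runBlock ℓ i, (if runPattern ℓ T m then p else 1 - p)
      = ∏ i ∈ T, p ^ ℓ * (if i = 0 then 1 else 1 - p) := prod_congr rfl fun i hi => by
        rw [← prod_runBlock]
        refine prod_congr rfl fun m hm => ?_
        simp [runPattern_of_mem_runBlock hsep hi hm]
    _ = p ^ (ℓ * r) * (1 - p) ^ #(T.erase 0) := by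
        rw [prod_mul_distrib, prod_const, hcard, ← pow_mul, prod_ite, filter_ne', prod_const_one,
          one_mul, prod_const]

lemma choose_excCount_eq_sum (x : ℕ → Bool) (n : ℕ) {ℓ : ℕ} (hℓ : 1 ≤ ℓ) (r : ℕ) :
    ((excCount x n ℓ).choose r : ℝ) =
      ∑ T ∈ (range n).powersetCard r, if ∀ i ∈ T, IsLongRunAt x n i ℓ then 1 else 0 := by
  rw [excCount_eq_card_isLongRunAt x n hℓ, ← card_powersetCard, sum_boole]
  congr 2
  ext T
  simp only [mem_powersetCard, mem_filter, subset_iff]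
  exact ⟨fun ⟨hT, hcard⟩ => ⟨⟨fun i hi => (hT hi).1, hcard⟩, fun i hi => (hT hi).2⟩,
    fun ⟨⟨hT, hcard⟩, hrun⟩ => ⟨fun i hi => ⟨hT hi, hrun i hi⟩, hcard⟩⟩

lemma Ex_choose_excCount (p : ℝ) (n : ℕ) {ℓ : ℕ} (hℓ : 1 ≤ ℓ) (r : ℕ) :
    Ex p n (fun x => ((excCount x n ℓ).choose r : ℝ)) =
      ∑ T ∈ separatedSets n ℓ r, p ^ (ℓ * r) * (1 - p) ^ #(T.erase 0) := by
  simp only [choose_excCount_eq_sum _ n hℓ r]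
  rw [Ex_sum]
  have hsub : separatedSets n ℓ r ⊆ (range n).powersetCard r :=
    fun T hT => powersetCard_mono (range_subset_range.2 (by omega)) (mem_filter.1 hT).1
  rw [← sum_subset hsub fun T hT hnot => ?_]
  · exact sum_congr rfl fun T hT => Ex_forall_isLongRunAt p hT
  · have hnever : ∀ x : ℕ → Bool, ¬∀ i ∈ T, IsLongRunAt x n i ℓ :=
      fun x hrun => hnot (mem_separatedSets_of_forall_isLongRunAt hT hrun)
    simp [Ex, hnever]

lemma card_separatedSets_le (n : ℕ) {ℓ : ℕ} (hℓ : 1 ≤ ℓ) (r : ℕ) :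
    #(separatedSets n ℓ r) ≤ n.choose r :=
  calc #(separatedSets n ℓ r) ≤ #((range (n + 1 - ℓ)).powersetCard r) := card_filter_le _ _
    _ = (n + 1 - ℓ).choose r := by rw [card_powersetCard, card_range]
    _ ≤ n.choose r := Nat.choose_le_choose r (by omega)

lemma card_separatedSets_zero_mem_le (n : ℕ) {ℓ : ℕ} (hℓ : 1 ≤ ℓ) (r : ℕ) :
    #{T ∈ separatedSets n ℓ (r + 1) | 0 ∈ T} ≤ n.choose r := by
  rw [show n.choose r = #((range n).powersetCard r) by rw [card_powersetCard, card_range]]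
  refine card_le_card_of_injOn (fun T => T.erase 0) (fun T hT => ?_) fun T₁ hT₁ T₂ hT₂ h => ?_
  · obtain ⟨hT, h0⟩ := mem_filter.1 hT
    obtain ⟨hTsub, hcard⟩ := mem_powersetCard.1 (mem_filter.1 hT).1
    refine mem_powersetCard.2 ⟨(erase_subset 0 T).trans (hTsub.trans ?_), ?_⟩
    · exact range_subset_range.2 (by omega)
    · rw [card_erase_of_mem h0, hcard, Nat.add_sub_cancel]
  · rw [← insert_erase (mem_filter.1 hT₁).2, ← insert_erase (mem_filter.1 hT₂).2]
    exact congrArg (insert 0) h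

/-- Moves the `j`-th smallest element of `T` up by `ℓ * j`. -/
def spread (ℓ : ℕ) (T : Finset ℕ) : Finset ℕ :=
  T.image fun t => t + ℓ * #{s ∈ T | s < t}

lemma card_filter_lt_lt_of_lt {T : Finset ℕ} {s t : ℕ} (hs : s ∈ T) (hst : s < t) :
    #{u ∈ T | u < s} < #{u ∈ T | u < t} := by
  refine card_lt_card ((ssubset_iff_of_subset ?_).2 ⟨s, ?_, ?_⟩)
  · exact fun u hu => mem_filter.2 ⟨(mem_filter.1 hu).1, (mem_filter.1 hu).2.trans hst⟩
  · exact mem_filter.2 ⟨hs, hst⟩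
  · simp

lemma add_lt_spread_of_lt (ℓ : ℕ) {T : Finset ℕ} {s t : ℕ} (hs : s ∈ T) (hst : s < t) :
    s + ℓ * #{u ∈ T | u < s} + ℓ < t + ℓ * #{u ∈ T | u < t} := by
  have := Nat.mul_le_mul_left ℓ (card_filter_lt_lt_of_lt hs hst)
  rw [Nat.mul_succ] at this
  omega

lemma strictMonoOn_spread (ℓ : ℕ) (T : Finset ℕ) :
    StrictMonoOn (fun t => t + ℓ * #{s ∈ T | s < t}) T :=
  fun s hs _ _ hst => by
    have := add_lt_spread_of_lt ℓ hs hst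
    dsimp only
    omega

lemma separated_spread (ℓ : ℕ) (T : Finset ℕ) : Separated ℓ (spread ℓ T) := by
  simp only [Separated, spread, mem_image]
  rintro _ ⟨s, hs, rfl⟩ _ ⟨t, ht, rfl⟩ hlt
  exact add_lt_spread_of_lt ℓ hs (((strictMonoOn_spread ℓ T).lt_iff_lt hs ht).1 hlt)

lemma card_spread (ℓ : ℕ) (T : Finset ℕ) : #(spread ℓ T) = #T :=
  card_image_of_injOn (strictMonoOn_spread ℓ T).injOn

lemma spread_injective (ℓ : ℕ) : Function.Injective (spread ℓ) := by
  have hrank : ∀ T : Finset ℕ, ∀ t ∈ T,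
      #{v ∈ spread ℓ T | v < t + ℓ * #{s ∈ T | s < t}} = #{s ∈ T | s < t} := fun T t ht => by
    rw [spread, filter_image, card_image_of_injOn ((strictMonoOn_spread ℓ T).injOn.mono
      (filter_subset _ _))]
    congr 1
    exact filter_congr fun s hs => (strictMonoOn_spread ℓ T).lt_iff_lt hs ht
  have hinv : ∀ T : Finset ℕ, (spread ℓ T).image (fun v => v - ℓ * #{w ∈ spread ℓ T | w < v}) = T :=
    fun T => by
      conv_lhs => enter [2]; rw [spread]
      rw [image_image]
      conv_rhs => rw [← image_id (s := T)]
      refine image_congr fun t ht => ?_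
      simp only [Function.comp_apply, hrank T t ht, Nat.add_sub_cancel, id]
  intro T₁ T₂ h
  rw [← hinv T₁, ← hinv T₂, h]

lemma choose_le_card_separatedSets (n ℓ r : ℕ) :
    (n + 1 - ℓ * r).choose r ≤ #(separatedSets n ℓ r) := by
  rw [← card_range (n + 1 - ℓ * r), ← card_powersetCard]
  refine card_le_card_of_injOn (spread ℓ) (fun T hT => ?_) (spread_injective ℓ).injOn
  obtain ⟨hTsub, hcard⟩ := mem_powersetCard.1 hT
  refine mem_filter.2 ⟨mem_powersetCard.2 ⟨fun v hv => ?_, by rw [card_spread, hcard]⟩,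
    separated_spread ℓ T⟩
  obtain ⟨t, ht, rfl⟩ := mem_image.1 hv
  have hrank : #{s ∈ T | s < t} + 1 ≤ r :=
    hcard ▸ card_lt_card (filter_ssubset.2 ⟨t, ht, lt_irrefl t⟩)
  have := Nat.mul_le_mul_left ℓ hrank
  have := mem_range.1 (hTsub ht)
  rw [Nat.mul_succ] at *
  exact mem_range.2 (by omega)

lemma le_Ex_choose_excCount {p : ℝ} (hp0 : 0 ≤ p) (hp1 : p ≤ 1) (n : ℕ) {ℓ : ℕ} (hℓ : 1 ≤ ℓ)
    (r : ℕ) :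
    (p ^ ℓ * (1 - p)) ^ r * (n + 1 - ℓ * r).choose r ≤
      Ex p n (fun x => ((excCount x n ℓ).choose r : ℝ)) := by
  rw [Ex_choose_excCount p n hℓ]
  calc (p ^ ℓ * (1 - p)) ^ r * (n + 1 - ℓ * r).choose r
      ≤ (p ^ ℓ * (1 - p)) ^ r * #(separatedSets n ℓ r) := by
        refine mul_le_mul_of_nonneg_left ?_ (pow_nonneg (mul_nonneg (pow_nonneg hp0 _) ?_) _)
        · exact_mod_cast choose_le_card_separatedSets n ℓ r
        · linarith
    _ = ∑ T ∈ separatedSets n ℓ r, p ^ (ℓ * r) * (1 - p) ^ r := by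
        rw [sum_const, nsmul_eq_mul, mul_pow, ← pow_mul, mul_comm]
    _ ≤ ∑ T ∈ separatedSets n ℓ r, p ^ (ℓ * r) * (1 - p) ^ #(T.erase 0) := by
        refine sum_le_sum fun T hT => ?_
        have hcard := (mem_powersetCard.1 (mem_filter.1 hT).1).2
        refine mul_le_mul_of_nonneg_left ?_ (pow_nonneg hp0 _)
        exact pow_le_pow_of_le_one (by linarith) (by linarith) (hcard ▸ card_erase_le)

lemma Ex_choose_excCount_le {p : ℝ} (hp0 : 0 ≤ p) (hp1 : p ≤ 1) (n : ℕ) {ℓ : ℕ} (hℓ : 1 ≤ ℓ)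
    (r : ℕ) :
    Ex p n (fun x => ((excCount x n ℓ).choose (r + 1) : ℝ)) ≤
      (p ^ ℓ * (1 - p)) ^ (r + 1) * n.choose (r + 1) +
        p ^ ℓ * ((p ^ ℓ * (1 - p)) ^ r * n.choose r) := by
  set t := p ^ ℓ * (1 - p)
  have ht : 0 ≤ t := mul_nonneg (pow_nonneg hp0 _) (by linarith)
  have htpow : ∀ k, t ^ k = p ^ (ℓ * k) * (1 - p) ^ k := fun k =>
    (mul_pow _ _ k).trans (by rw [← pow_mul])
  have hterm : ∀ T ∈ separatedSets n ℓ (r + 1), p ^ (ℓ * (r + 1)) * (1 - p) ^ #(T.erase 0) ≤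
      t ^ (r + 1) + if 0 ∈ T then p ^ ℓ * t ^ r else 0 := fun T hT => by
    have hcard := (mem_powersetCard.1 (mem_filter.1 hT).1).2
    split_ifs with h0
    · rw [card_erase_of_mem h0, hcard, Nat.add_sub_cancel, htpow r, mul_add_one, pow_add]
      nlinarith [pow_nonneg ht (r + 1)]
    · rw [erase_eq_of_notMem h0, hcard, htpow, add_zero]
  rw [Ex_choose_excCount p n hℓ]
  calc _ ≤ ∑ T ∈ separatedSets n ℓ (r + 1), (t ^ (r + 1) + if 0 ∈ T then p ^ ℓ * t ^ r else 0) :=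
        sum_le_sum hterm
    _ = #(separatedSets n ℓ (r + 1)) * t ^ (r + 1) +
          #{T ∈ separatedSets n ℓ (r + 1) | 0 ∈ T} * (p ^ ℓ * t ^ r) := by
        rw [sum_add_distrib, sum_const, ← sum_filter, sum_const, nsmul_eq_mul, nsmul_eq_mul]
    _ ≤ n.choose (r + 1) * t ^ (r + 1) + n.choose r * (p ^ ℓ * t ^ r) := by
        refine add_le_add (mul_le_mul_of_nonneg_right ?_ (pow_nonneg ht _))
          (mul_le_mul_of_nonneg_right ?_ (mul_nonneg (pow_nonneg hp0 _) (pow_nonneg ht _)))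
        · exact_mod_cast card_separatedSets_le n hℓ (r + 1)
        · exact_mod_cast card_separatedSets_zero_mem_le n hℓ r
    _ = _ := by ring

lemma tendsto_pow_mul_choose {α : Type*} {l : Filter α} {t : α → ℝ} {u : α → ℕ} {θ : ℝ}
    (ht : Tendsto t l (nhds 0)) (hu : Tendsto (fun a => u a * t a) l (nhds θ)) (r : ℕ) :
    Tendsto (fun a => t a ^ r * (u a).choose r) l (nhds (θ ^ r / r.factorial)) := by
  have hprod : ∀ a, t a ^ r * (u a).choose r =
      (∏ j ∈ range r, (u a * t a - j * t a)) / r.factorial := fun a => by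
    rw [Nat.cast_choose_eq_descPochhammer_div, descPochhammer_eval_eq_prod_range]
    simp_rw [← sub_mul]
    rw [prod_mul_distrib, prod_const, card_range]
    ring
  simp_rw [hprod]
  have hfactor : ∀ j ∈ range r, Tendsto (fun a => u a * t a - j * t a) l (nhds θ) :=
    fun j _ => by simpa using hu.sub (ht.const_mul (j : ℝ))
  simpa using (tendsto_finsetProd _ hfactor).div_const (r.factorial : ℝ)

lemma tendsto_natSub_mul {α : Type*} {l : Filter α} {t : α → ℝ} {u v : α → ℕ} {θ : ℝ}
    (ht : ∀ a, 0 ≤ t a) (hu : Tendsto (fun a => (u a : ℝ) * t a) l (nhds θ))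
    (hv : Tendsto (fun a => (v a : ℝ) * t a) l (nhds 0)) :
    Tendsto (fun a => ((u a - v a : ℕ) : ℝ) * t a) l (nhds θ) := by
  have hlow : Tendsto (fun a => ((u a : ℝ) - v a) * t a) l (nhds θ) := by
    simpa [sub_mul] using hu.sub hv
  refine tendsto_of_tendsto_of_tendsto_of_le_of_le hlow hu (fun a => ?_) (fun a => ?_) <;>
    refine mul_le_mul_of_nonneg_right ?_ (ht a)
  · have : u a ≤ u a - v a + v a := by omega
    have := (Nat.cast_le (α := ℝ)).2 this
    push_cast at this
    linarith
  · exact Nat.cast_le.2 (Nat.sub_le _ _)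

lemma tendsto_Ex_choose_excCount {p : ℝ} (hp : 0 < p) (hp1 : p < 1) {θ : ℝ} {ℓ : ℕ → ℕ}
    (hℓ : Tendsto ℓ atTop atTop)
    (hlim : Tendsto (fun n : ℕ => (n : ℝ) * p ^ (ℓ n) * (1 - p)) atTop (nhds θ)) (r : ℕ) :
    Tendsto (fun n => Ex p n (fun x => ((excCount x n (ℓ n)).choose (r + 1) : ℝ))) atTop
      (nhds (θ ^ (r + 1) / (r + 1).factorial)) := by
  set t : ℕ → ℝ := fun n => p ^ ℓ n * (1 - p)
  have hpℓ : Tendsto (fun n => p ^ ℓ n) atTop (nhds 0) :=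
    (tendsto_pow_atTop_nhds_zero_of_lt_one hp.le hp1).comp hℓ
  have ht : Tendsto t atTop (nhds 0) := by simpa using hpℓ.mul_const (1 - p)
  have hnt : Tendsto (fun n : ℕ => (n : ℝ) * t n) atTop (nhds θ) := by
    simpa only [t, mul_assoc] using hlim
  have hℓt : Tendsto (fun n => (ℓ n : ℝ) * t n) atTop (nhds 0) := by
    have := ((tendsto_self_mul_const_pow_of_lt_one hp.le hp1).mul_const (1 - p)).comp hℓ
    rw [zero_mul] at this
    exact this.congr fun n => by simp only [Function.comp_apply, t, mul_assoc]
  have hroom : Tendsto (fun n => ((n + 1 - ℓ n * (r + 1) : ℕ) : ℝ) * t n) atTop (nhds θ) := by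
    refine tendsto_natSub_mul (fun n => by positivity) ?_ ?_
    · simpa [add_mul] using hnt.add ht
    · simpa using (hℓt.const_mul ((r : ℝ) + 1)).congr fun n => by ring
  have hupper := (tendsto_pow_mul_choose ht hnt (r + 1)).add
    (hpℓ.mul (tendsto_pow_mul_choose ht hnt r))
  rw [zero_mul, add_zero] at hupper
  refine tendsto_of_tendsto_of_tendsto_of_le_of_le' (tendsto_pow_mul_choose ht hroom (r + 1))
    hupper ?_ ?_ <;> filter_upwards [hℓ.eventually_ge_atTop 1] with n hn
  · exact le_Ex_choose_excCount hp.le hp1.le n hn (r + 1)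
  · exact Ex_choose_excCount_le hp.le hp1.le n hn r

lemma alternating_sum_choose_succ (k s : ℕ) :
    ∑ r ∈ range (s + 1), (-1 : ℝ) ^ r * (k + 1).choose r = (-1) ^ s * k.choose s := by
  exact_mod_cast Int.alternating_sum_range_choose_eq_choose

lemma indicator_le_alternating_sum_choose {s : ℕ} (hs : Even s) (g : ℕ) :
    (if g = 0 then 1 else 0 : ℝ) ≤ ∑ r ∈ range (s + 1), (-1 : ℝ) ^ r * g.choose r := by
  rcases g with _ | k
  · simp [sum_range_succ']
  · rw [alternating_sum_choose_succ, hs.neg_one_pow]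
    simp

lemma alternating_sum_choose_le_indicator {s : ℕ} (hs : Odd s) (g : ℕ) :
    ∑ r ∈ range (s + 1), (-1 : ℝ) ^ r * g.choose r ≤ (if g = 0 then 1 else 0 : ℝ) := by
  rcases g with _ | k
  · simp [sum_range_succ']
  · rw [alternating_sum_choose_succ, hs.neg_one_pow]
    simp

lemma tendsto_Ex_eq_zero_of_tendsto_Ex_choose {p : ℝ} (hp0 : 0 ≤ p) (hp1 : p ≤ 1)
    {G : ℕ → (ℕ → Bool) → ℕ} {θ : ℝ}
    (hG : ∀ r, Tendsto (fun n => Ex p n (fun x => ((G n x).choose (r + 1) : ℝ))) atTop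
      (nhds (θ ^ (r + 1) / (r + 1).factorial))) :
    Tendsto (fun n => Ex p n (fun x => if G n x = 0 then 1 else 0)) atTop (nhds (Real.exp (-θ))) := by
  set bonferroni : ℕ → ℕ → ℝ := fun s n =>
    Ex p n (fun x => ∑ r ∈ range (s + 1), (-1 : ℝ) ^ r * (G n x).choose r)
  have hmoment : ∀ r, Tendsto (fun n => Ex p n (fun x => ((G n x).choose r : ℝ))) atTop
      (nhds (θ ^ r / r.factorial)) := by
    rintro (_ | r)
    · simp [Ex_one]
    · exact hG r
  have hbonferroni : ∀ s, Tendsto (bonferroni s) atTop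
      (nhds (∑ r ∈ range (s + 1), (-θ) ^ r / r.factorial)) := fun s => by
    simp only [bonferroni, Ex_sum, Ex_const_mul]
    refine tendsto_finsetSum _ fun r _ => ?_
    rw [neg_pow θ, mul_div_assoc]
    exact (hmoment r).const_mul _
  have hexp : Tendsto (fun s => ∑ r ∈ range (s + 1), (-θ) ^ r / r.factorial) atTop
      (nhds (Real.exp (-θ))) := by
    rw [Real.exp_eq_exp_ℝ]
    exact (NormedSpace.expSeries_div_hasSum_exp (-θ)).tendsto_sum_nat.comp
      (tendsto_add_atTop_nat 1)
  refine tendsto_order.2 ⟨fun a ha => ?_, fun b hb => ?_⟩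
  · obtain ⟨N, hN⟩ := eventually_atTop.1 (hexp.eventually (lt_mem_nhds ha))
    filter_upwards [(hbonferroni (2 * N + 1)).eventually (lt_mem_nhds (hN _ (by omega)))]
      with n hn
    exact hn.trans_le <| Ex_mono hp0 hp1 fun x =>
      alternating_sum_choose_le_indicator (odd_two_mul_add_one N) _
  · obtain ⟨N, hN⟩ := eventually_atTop.1 (hexp.eventually (gt_mem_nhds hb))
    filter_upwards [(hbonferroni (2 * N)).eventually (gt_mem_nhds (hN _ (by omega)))] with n hn
    exact (Ex_mono hp0 hp1 fun x =>
      indicator_le_alternating_sum_choose (even_two_mul N) _).trans_lt hn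

theorem stmt13_general (p : ℝ) (hp : 0 < p) (hp1 : p < 1) (θ : ℝ)
    (ℓ : ℕ → ℕ) (hℓ : Filter.Tendsto ℓ Filter.atTop Filter.atTop)
    (hlim : Filter.Tendsto (fun n : ℕ => (n : ℝ) * p ^ (ℓ n) * (1 - p))
      Filter.atTop (nhds θ)) :
    (∀ r : ℕ, 1 ≤ r →
      Filter.Tendsto (fun n : ℕ => Ex p n (fun x => ((excCount x n (ℓ n)).choose r : ℝ)))
        Filter.atTop (nhds (θ ^ r / r.factorial))) ∧
    Filter.Tendsto (fun n : ℕ => Pr p n {x | longestRun x n < ℓ n})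
      Filter.atTop (nhds (Real.exp (-θ))) := by
  have hmoment := tendsto_Ex_choose_excCount hp hp1 hℓ hlim
  refine ⟨fun r hr => ?_, ?_⟩
  · obtain ⟨k, rfl⟩ := Nat.exists_eq_add_of_le' hr
    exact hmoment k
  · refine (tendsto_Ex_eq_zero_of_tendsto_Ex_choose hp.le hp1.le hmoment).congr' ?_
    filter_upwards [hℓ.eventually_ge_atTop 1] with n hn
    simp only [Pr_eq_Ex, Set.mem_ofPred_eq, longestRun_lt_iff_excCount_eq_zero _ n hn]
    congr!

/-- Poisson regime: convergence of binomial moments and of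
`P(L(n) < ℓ(n))` when `n p^{ℓ(n)} q → θ`. -/
theorem stmt13 (p : ℝ) (hp : 0 < p) (hp1 : p < 1) (θ : ℝ) (hθ : 0 < θ)
    (ℓ : ℕ → ℕ) (hℓ : Filter.Tendsto ℓ Filter.atTop Filter.atTop)
    (hlim : Filter.Tendsto (fun n : ℕ => (n : ℝ) * p ^ (ℓ n) * (1 - p))
      Filter.atTop (nhds θ)) :
    (∀ r : ℕ, 1 ≤ r →
      Filter.Tendsto (fun n : ℕ => Ex p n (fun x => ((excCount x n (ℓ n)).choose r : ℝ)))
        Filter.atTop (nhds (θ ^ r / r.factorial))) ∧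
    Filter.Tendsto (fun n : ℕ => Pr p n {x | longestRun x n < ℓ n})
      Filter.atTop (nhds (Real.exp (-θ))) :=
  stmt13_general p hp hp1 θ ℓ hℓ hlim
end
end
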